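/- arXiv:2601.11973 — 8 statements merged into one kernel-verified Lean document; each statement's English description precedes it below -/
import Mathlib

section
/- Let μ and ν be probability measures on a measurable space (S, 𝒮), and let Λ be a σ-finite measure on S with μ ≪ Λ and ν ≪ Λ. Then ∫_S min((dμ/dΛ)(y), (dν/dΛ)(y)) Λ(dy) = ∫_S min((dν/dμ)(y), 1) μ(dy). In particular, the left-hand side is the same for every σ-finite dominating measure Λ. -/
open MeasureTheory

/-- **Independence of the overlap coefficient from the dominating measure.**
If `μ, ν` are probability measures, both absolutely continuous with respect to a
σ-finite measure `Λ`, then `∫ min(dμ/dΛ, dν/dΛ) dΛ = ∫ min(dν/dμ, 1) dμ`.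
In particular the left-hand side does not depend on the choice of `Λ`. -/
theorem overlap_indep_of_dominating
    {S : Type*} [MeasurableSpace S]
    (μ ν Λ : Measure S) [IsProbabilityMeasure μ] [IsProbabilityMeasure ν]
    [SigmaFinite Λ] (hμ : μ ≪ Λ) (hν : ν ≪ Λ) :
    ∫⁻ y, min (μ.rnDeriv Λ y) (ν.rnDeriv Λ y) ∂Λ
      = ∫⁻ y, min (ν.rnDeriv μ y) 1 ∂μ := by
  set f := μ.rnDeriv Λ with hf_def
  set g := ν.rnDeriv Λ with hg_def
  set h := ν.rnDeriv μ with hh_def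
  set s := (ν.singularPart μ).rnDeriv Λ with hs_def
  -- the singular part vanishes a.e. Λ where f ≠ 0
  have hs_zero : ∀ᵐ x ∂Λ, f x ≠ 0 → s x = 0 := by
    have hE : MeasurableSet {x | s x ≠ 0} :=
      (Measure.measurable_rnDeriv _ _) (measurableSet_singleton 0).compl
    have hμE : μ {x | s x ≠ 0} = 0 := by
      have h0 : s =ᵐ[μ] 0 :=
        Measure.rnDeriv_eq_zero_of_mutuallySingular
          (ν.mutuallySingular_singularPart μ) hμ
      simpa [Filter.EventuallyEq, ae_iff] using h0
    have hμE' : ∫⁻ x in {x | s x ≠ 0}, f x ∂Λ = 0 := by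
      rw [← withDensity_apply f hE, Measure.withDensity_rnDeriv_eq μ Λ hμ, hμE]
    have := (setLIntegral_eq_zero_iff hE (Measure.measurable_rnDeriv μ Λ)).mp hμE'
    filter_upwards [this] with x hx hfx
    by_contra hsx
    exact hfx (hx hsx)
  -- decomposition of g
  have hg_add : g =ᵐ[Λ] s + ((μ.withDensity h).rnDeriv Λ) := by
    have h2 := Measure.rnDeriv_add' (ν.singularPart μ) (μ.withDensity h) Λ
    rw [← ν.haveLebesgueDecomposition_add μ] at h2
    exact h2
  have hwd : (μ.withDensity h).rnDeriv Λ =ᵐ[Λ] fun x ↦ h x * f x :=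
    Measure.rnDeriv_withDensity_left
      (Measure.measurable_rnDeriv ν μ).aemeasurable (Measure.rnDeriv_ne_top ν μ)
  -- pointwise identity a.e. Λ
  have key : (fun x ↦ min (f x) (g x)) =ᵐ[Λ] fun x ↦ f x * min (h x) 1 := by
    filter_upwards [hs_zero, hg_add, hwd] with x hx0 hxg hxw
    rcases eq_or_ne (f x) 0 with hf0 | hf0
    · simp [hf0]
    · have hsx : s x = 0 := hx0 hf0
      have hg : g x = h x * f x := by
        rw [hxg]; simp [hsx, hxw]
      rw [hg]
      rcases le_total (h x) 1 with hle | hle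
      · rw [min_eq_left hle, min_eq_right (by simpa using mul_le_mul_left hle (f x)),
          mul_comm]
      · rw [min_eq_right hle, min_eq_left (by simpa using mul_le_mul_left hle (f x)),
          mul_one]
  rw [lintegral_congr_ae key]
  exact lintegral_rnDeriv_mul hμ
    ((Measure.measurable_rnDeriv ν μ).min measurable_const).aemeasurable
end

section
/- Let S be a measurable space and κ a Markov kernel on S. For m ≥ 1 define the Dobrushin contraction coefficient δ^{(m)} := sup_{x, x' ∈ S} sup_{A measurable} (κ^m(x, A) − κ^m(x', A)). Then for all integers k ≥ 1 and m ≥ 1 one has δ^{(km)} ≤ (δ^{(m)})^k; in particular δ^{(m)} ≤ (δ^{(1)})^m. -/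
open MeasureTheory ProbabilityTheory

/-- `kernelPow κ m` is the `m`-fold composition of the kernel `κ`
(the `m`-step transition kernel); `kernelPow κ 0` is the identity
(Dirac) kernel. -/
noncomputable def kernelPow {S : Type*} [MeasurableSpace S]
    (κ : Kernel S S) : ℕ → Kernel S S
  | 0 => Kernel.id
  | n + 1 => (kernelPow κ n) ∘ₖ κ

lemma key_lintegral {S : Type*} [MeasurableSpace S] (μ ν : Measure S)
    [IsFiniteMeasure μ] [IsFiniteMeasure ν] {g : S → ENNReal}
    {B d : ENNReal} (hB : ∀ y, g y ≤ B) (hd : ∀ A, MeasurableSet A → μ A - ν A ≤ d) :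
    ∫⁻ y, g y ∂μ ≤ (∫⁻ y, g y ∂ν) + B * d := by
  obtain ⟨s, hs, h1, h2⟩ := hahn_decomposition (μ := μ) (ν := ν)
  have hle : ν.restrict s ≤ μ.restrict s := by
    refine Measure.le_iff.2 fun t ht => ?_
    rw [Measure.restrict_apply ht, Measure.restrict_apply ht]
    exact h1 _ (ht.inter hs) Set.inter_subset_right
  have hle' : μ.restrict sᶜ ≤ ν.restrict sᶜ := by
    refine Measure.le_iff.2 fun t ht => ?_
    rw [Measure.restrict_apply ht, Measure.restrict_apply ht]
    exact h2 _ (ht.inter hs.compl) Set.inter_subset_right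
  have hsub : μ.restrict s - ν.restrict s + ν.restrict s = μ.restrict s :=
    Measure.sub_add_cancel_of_le hle
  calc ∫⁻ y, g y ∂μ = (∫⁻ y in s, g y ∂μ) + ∫⁻ y in sᶜ, g y ∂μ :=
        (lintegral_add_compl g hs).symm
    _ ≤ ((∫⁻ y, g y ∂(μ.restrict s - ν.restrict s)) + ∫⁻ y in s, g y ∂ν)
        + ∫⁻ y in sᶜ, g y ∂ν := by
        gcongr
        · rw [← lintegral_add_measure, hsub]
    _ ≤ (B * d + ∫⁻ y in s, g y ∂ν) + ∫⁻ y in sᶜ, g y ∂ν := by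
        gcongr
        calc ∫⁻ y, g y ∂(μ.restrict s - ν.restrict s)
            ≤ ∫⁻ _, B ∂(μ.restrict s - ν.restrict s) := lintegral_mono fun y => hB y
          _ = B * (μ.restrict s - ν.restrict s) Set.univ := by rw [lintegral_const]
          _ = B * (μ s - ν s) := by
              rw [Measure.sub_apply MeasurableSet.univ hle,
                Measure.restrict_apply_univ, Measure.restrict_apply_univ]
          _ ≤ B * d := by gcongr; exact hd s hs
    _ = ((∫⁻ y in s, g y ∂ν) + ∫⁻ y in sᶜ, g y ∂ν) + B * d := by ring
    _ = (∫⁻ y, g y ∂ν) + B * d := by rw [lintegral_add_compl g hs]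

/-- **Submultiplicativity of the Dobrushin contraction coefficient.**
For a Markov kernel `κ` with `m`-step Dobrushin coefficient
`δ^{(m)} := sup_{x,x'} sup_A (κ^m(x,A) - κ^m(x',A))`,
one has `δ^{(km)} ≤ (δ^{(m)})^k` for all `k, m ≥ 1`;
in particular `δ^{(m)} ≤ (δ^{(1)})^m`. -/
theorem dobrushin_coeff_submul
    {S : Type*} [MeasurableSpace S] (κ : Kernel S S) [IsMarkovKernel κ]
    (δ : ℕ → ENNReal)
    (hδ : ∀ m, δ m = ⨆ (x : S) (x' : S) (A : Set S) (_ : MeasurableSet A),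
      (kernelPow κ m x A - kernelPow κ m x' A)) :
    (∀ k m : ℕ, 1 ≤ k → 1 ≤ m → δ (k * m) ≤ (δ m) ^ k)
    ∧ ∀ m : ℕ, 1 ≤ m → δ m ≤ (δ 1) ^ m := by
  have hMarkov : ∀ n, IsMarkovKernel (kernelPow κ n) := by
    intro n
    induction n with
    | zero => exact (by infer_instance : IsMarkovKernel (Kernel.id : Kernel S S))
    | succ n ih => exact Kernel.IsMarkovKernel.comp _ _
  have hcomp : ∀ a b, kernelPow κ (a + b) = kernelPow κ a ∘ₖ kernelPow κ b := by
    intro a b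
    induction b with
    | zero => simp [kernelPow, Kernel.comp_id]
    | succ b ih =>
        have : a + (b + 1) = (a + b) + 1 := by ring
        rw [this]
        show kernelPow κ (a + b) ∘ₖ κ = _
        rw [ih]
        have := hMarkov a
        have := hMarkov b
        rw [Kernel.comp_assoc (kernelPow κ a) (kernelPow κ b) κ]
        rfl
  -- pointwise bound for δ terms
  have hδ_le : ∀ n (x x' : S) (A : Set S), MeasurableSet A →
      kernelPow κ n x A - kernelPow κ n x' A ≤ δ n := by
    intro n x x' A hA
    rw [hδ n]
    exact le_iSup_of_le x (le_iSup_of_le x' (le_iSup_of_le A (le_iSup_of_le hA le_rfl)))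
  rcases isEmpty_or_nonempty S with hS | hS
  · have hz : ∀ n, δ n = 0 := by intro n; rw [hδ n]; simp
    constructor
    · intro k m hk hm; rw [hz]; exact zero_le
    · intro m hm; rw [hz]; exact zero_le
  -- key submultiplicativity
  have key : ∀ a b, δ (a + b) ≤ δ a * δ b := by
    intro a b
    rw [hδ (a + b)]
    refine iSup_le fun x => iSup_le fun x' => iSup_le fun A => iSup_le fun hA => ?_
    have := hMarkov a; have := hMarkov b
    set f : S → ENNReal := fun y => kernelPow κ a y A with hf
    have hfm : Measurable f := Kernel.measurable_coe _ hA
    set c : ENNReal := ⨅ y, f y with hc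
    have hfc : ∀ y, f y - c ≤ δ a := by
      intro y
      rw [hc, ENNReal.sub_iInf]
      exact iSup_le fun y' => hδ_le a y y' A hA
    have hcle : ∀ y, c ≤ f y := fun y => iInf_le _ y
    have happly : ∀ z : S, kernelPow κ (a + b) z A = ∫⁻ y, f y ∂(kernelPow κ b z) := by
      intro z
      rw [hcomp a b, Kernel.comp_apply' _ _ _ hA]
    have hcf : c ≠ ⊤ := by
      obtain ⟨y⟩ := hS
      have h1 : f y ≤ 1 := prob_le_one
      exact ne_top_of_le_ne_top (ne_top_of_le_ne_top ENNReal.one_ne_top h1) (iInf_le _ y)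
    -- integral identity: ∫ f = ∫ (f - c) + c for probability measures
    have hint : ∀ (μ : Measure S) [IsProbabilityMeasure μ],
        ∫⁻ y, f y ∂μ = (∫⁻ y, f y - c ∂μ) + c := by
      intro μ hμ
      have : ∀ y, f y = (f y - c) + c := fun y => (tsub_add_cancel_of_le (hcle y)).symm
      calc ∫⁻ y, f y ∂μ = ∫⁻ y, (f y - c) + c ∂μ := by
            exact lintegral_congr fun y => this y
        _ = (∫⁻ y, f y - c ∂μ) + c := by
            rw [lintegral_add_right _ measurable_const, lintegral_const, measure_univ, mul_one]
    rw [happly x, happly x', hint, hint]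
    have hkey := key_lintegral (kernelPow κ b x) (kernelPow κ b x')
      (g := fun y => f y - c) (B := δ a) (d := δ b) hfc
      (fun A' hA' => hδ_le b x x' A' hA')
    refine tsub_le_iff_right.2 ?_
    calc (∫⁻ y, f y - c ∂(kernelPow κ b x)) + c
        ≤ ((∫⁻ y, f y - c ∂(kernelPow κ b x')) + δ a * δ b) + c := add_le_add_left hkey c
      _ = δ a * δ b + ((∫⁻ y, f y - c ∂(kernelPow κ b x')) + c) := by ring
  have part1 : ∀ k m : ℕ, 1 ≤ k → 1 ≤ m → δ (k * m) ≤ (δ m) ^ k := by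
    intro k m hk hm
    induction k, hk using Nat.le_induction with
    | base => simp
    | succ k hk ih =>
        have : (k + 1) * m = k * m + m := by ring
        rw [this, pow_succ]
        exact (key (k * m) m).trans (by gcongr)
  refine ⟨part1, fun m hm => ?_⟩
  have := part1 m 1 hm le_rfl
  simpa using this
end

section
/- Let S be a measurable space and κ a Markov kernel on S. Suppose there exist C > 0, λ ∈ (0,1) and an integer m₀ ≥ 1 such that for every m ≥ m₀, sup_{x,x'∈S} sup_{A measurable} (κ^m(x, A) − κ^m(x', A)) ≤ C λ^m. Then for every ε > 0 there exists an integer m₁ ≥ m₀ such that: (i) 1 − α^{(m₁)} ≤ ((1 + ε/2) λ)^{m₁}, and (ii) for every n ≥ m₁, sup_{x,x'∈S} sup_{A measurable} (κ^n(x, A) − κ^n(x', A)) ≤ ((1 + ε) λ)^n. -/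
open MeasureTheory ProbabilityTheory

lemma kernelPow_markov {S : Type*} [MeasurableSpace S] (κ : Kernel S S)
    [IsMarkovKernel κ] (m : ℕ) : IsMarkovKernel (kernelPow κ m) := by
  induction m with
  | zero => rw [kernelPow]; infer_instance
  | succ n ih => rw [kernelPow]; exact Kernel.IsMarkovKernel.comp _ _

lemma key_lemma {S : Type*} [MeasurableSpace S] (μ ν : Measure S)
    [IsProbabilityMeasure μ] [IsProbabilityMeasure ν] :
    ∃ B : Set S, MeasurableSet B ∧
      1 - ∫⁻ y, min (ν.rnDeriv μ y) 1 ∂μ ≤ μ B - ν B := by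
  obtain ⟨t, ht, hνt, hμt⟩ := ν.mutuallySingular_singularPart μ
  set f := ν.rnDeriv μ with hfdef
  have hf : Measurable f := Measure.measurable_rnDeriv ν μ
  set B : Set S := {y | f y < 1} ∩ t with hBdef
  have hB : MeasurableSet B := (hf measurableSet_Iio).inter ht
  refine ⟨B, hB, ?_⟩
  have hνB : ν B = ∫⁻ y in B, f y ∂μ := by
    conv_lhs => rw [ν.haveLebesgueDecomposition_add μ]
    rw [Measure.add_apply, withDensity_apply _ hB]
    have : ν.singularPart μ B = 0 :=
      le_antisymm (hνt ▸ measure_mono Set.inter_subset_right) (zero_le)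
    rw [this, zero_add]
  have hνμB : ν B ≤ μ B := by
    rw [hνB]
    calc ∫⁻ y in B, f y ∂μ ≤ ∫⁻ _ in B, 1 ∂μ := by
          refine setLIntegral_mono' hB fun y hy => le_of_lt hy.1
      _ = μ B := by simp
  have hI : ∫⁻ y, min (f y) 1 ∂μ = ν B + μ Bᶜ := by
    rw [← lintegral_add_compl (fun y => min (f y) 1) hB]
    congr 1
    · rw [hνB]
      refine setLIntegral_congr_fun_ae hB (Filter.Eventually.of_forall fun y hy => ?_)
      exact min_eq_left (le_of_lt hy.1)
    · have h1 : ∀ᵐ y ∂μ, y ∈ t := by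
        rw [ae_iff]; exact hμt
      calc ∫⁻ y in Bᶜ, min (f y) 1 ∂μ = ∫⁻ _ in Bᶜ, 1 ∂μ := by
            refine setLIntegral_congr_fun_ae hB.compl ?_
            filter_upwards [h1] with y hyt hyB
            have : ¬ f y < 1 := fun h => hyB ⟨h, hyt⟩
            exact min_eq_right (not_lt.mp this)
        _ = μ Bᶜ := by simp
  rw [tsub_le_iff_right, hI, ← add_assoc, tsub_add_cancel_of_le hνμB,
    measure_add_measure_compl hB, measure_univ]

/-- **Near-optimality of the `m`-step Markov–Dobrushin method.**
If `sup_{x,x'} sup_A (κ^m(x,A) - κ^m(x',A)) ≤ C λ^m` for all `m ≥ m₀`,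
then for every `ε > 0` there is `m₁ ≥ m₀` with
`1 - α^{(m₁)} ≤ ((1+ε/2)λ)^{m₁}` and, for every `n ≥ m₁`,
`sup_{x,x'} sup_A (κ^n(x,A) - κ^n(x',A)) ≤ ((1+ε)λ)^n`. -/
theorem md_m_near_optimal
    {S : Type*} [MeasurableSpace S] (κ : Kernel S S) [IsMarkovKernel κ]
    (α : ℕ → ENNReal)
    (hα : ∀ m, α m = ⨅ (x : S) (x' : S),
      ∫⁻ y, min ((kernelPow κ m x').rnDeriv (kernelPow κ m x) y) 1
        ∂(kernelPow κ m x))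
    (C : ℝ) (hC : 0 < C) (lam : ℝ) (hlam : lam ∈ Set.Ioo (0 : ℝ) 1)
    (m₀ : ℕ) (hm₀ : 1 ≤ m₀)
    (hconv : ∀ m, m₀ ≤ m → ∀ (x x' : S) (A : Set S), MeasurableSet A →
      kernelPow κ m x A - kernelPow κ m x' A ≤ ENNReal.ofReal (C * lam ^ m)) :
    ∀ ε : ℝ, 0 < ε → ∃ m₁ : ℕ, m₀ ≤ m₁ ∧
      (1 - α m₁ ≤ ENNReal.ofReal (((1 + ε / 2) * lam) ^ m₁)) ∧
      ∀ n, m₁ ≤ n → ∀ (x x' : S) (A : Set S), MeasurableSet A →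
        kernelPow κ n x A - kernelPow κ n x' A
          ≤ ENNReal.ofReal (((1 + ε) * lam) ^ n) := by
  intro ε hε
  obtain ⟨N, hN⟩ : ∃ N : ℕ, C < (1 + ε / 2) ^ N :=
    pow_unbounded_of_one_lt C (by linarith)
  refine ⟨max m₀ N, le_max_left _ _, ?_, ?_⟩
  · set m₁ := max m₀ N
    have hCle : C ≤ (1 + ε / 2) ^ m₁ :=
      le_trans hN.le (pow_le_pow_right₀ (by linarith) (le_max_right _ _))
    have hbound : C * lam ^ m₁ ≤ ((1 + ε / 2) * lam) ^ m₁ := by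
      rw [mul_pow]
      exact mul_le_mul_of_nonneg_right hCle (pow_nonneg hlam.1.le _)
    rw [hα, ENNReal.sub_iInf]
    refine iSup_le fun x => ?_
    rw [ENNReal.sub_iInf]
    refine iSup_le fun x' => ?_
    haveI := kernelPow_markov κ m₁
    obtain ⟨B, hB, hkey⟩ := key_lemma (kernelPow κ m₁ x) (kernelPow κ m₁ x')
    refine hkey.trans ((hconv m₁ (le_max_left _ _) x x' B hB).trans ?_)
    exact ENNReal.ofReal_le_ofReal hbound
  · intro n hn x x' A hA
    have hCle : C ≤ (1 + ε) ^ n := by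
      calc C ≤ (1 + ε / 2) ^ N := hN.le
        _ ≤ (1 + ε) ^ N := pow_le_pow_left₀ (by linarith) (by linarith) _
        _ ≤ (1 + ε) ^ n :=
            pow_le_pow_right₀ (by linarith) (le_trans (le_max_right _ _) hn)
    refine (hconv n (le_trans (le_max_left _ _) hn) x x' A hA).trans ?_
    refine ENNReal.ofReal_le_ofReal ?_
    rw [mul_pow]
    exact mul_le_mul_of_nonneg_right hCle (pow_nonneg hlam.1.le _)
end

section
/- Let (S, 𝒮) be a measurable space such that the diagonal D := {(x, y) ∈ S × S : x = y} is a measurable subset of S × S. Let μ¹ and μ² be probability measures on S and set α := ∫_S min((dμ²/dμ¹)(y), 1) μ¹(dy). Then there exists a probability measure π on S × S whose first marginal is μ¹ and whose second marginal is μ² (i.e., π(A × S) = μ¹(A) and π(S × A) = μ²(A) for all A ∈ 𝒮), and such that π(D) = α. -/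
open MeasureTheory ENNReal

private lemma measure_eq_of_le_of_univ_eq {S : Type*} [MeasurableSpace S]
    {μ ν : Measure S} [IsFiniteMeasure μ] (h : ν ≤ μ)
    (huniv : ν Set.univ = μ Set.univ) : ν = μ := by
  ext A hA
  have h1 : ν A ≤ μ A := h A
  have h2 : ν Aᶜ ≤ μ Aᶜ := h Aᶜ
  have hsum : ν A + ν Aᶜ = μ A + μ Aᶜ := by
    rw [measure_add_measure_compl hA, measure_add_measure_compl hA, huniv]
  refine le_antisymm h1 ?_
  have hfin : ν Aᶜ ≠ ⊤ := (lt_of_le_of_lt h2 (measure_lt_top μ Aᶜ)).ne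
  have hle : μ A + ν Aᶜ ≤ ν A + ν Aᶜ := by
    rw [hsum]; exact add_le_add le_rfl h2
  exact ENNReal.le_of_add_le_add_right hfin hle

/-- **Coupling lemma (optimal coupling).**
If the diagonal of `S × S` is measurable, then for any probability
measures `μ¹, μ²` on `S` there is a coupling `π` of `μ¹` and `μ²`
such that `π(diagonal) = α := ∫ min(dμ²/dμ¹, 1) dμ¹`. -/
theorem exists_optimal_coupling
    {S : Type*} [MeasurableSpace S]
    (hdiag : MeasurableSet {p : S × S | p.1 = p.2})
    (μ₁ μ₂ : Measure S) [IsProbabilityMeasure μ₁] [IsProbabilityMeasure μ₂] :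
    ∃ π : Measure (S × S), IsProbabilityMeasure π ∧
      (∀ A : Set S, MeasurableSet A → π (A ×ˢ Set.univ) = μ₁ A) ∧
      (∀ A : Set S, MeasurableSet A → π (Set.univ ×ˢ A) = μ₂ A) ∧
      π {p : S × S | p.1 = p.2} = ∫⁻ y, min (μ₂.rnDeriv μ₁ y) 1 ∂μ₁ := by
  classical
  set f : S → ℝ≥0∞ := μ₂.rnDeriv μ₁ with hf
  have hfmeas : Measurable f := μ₂.measurable_rnDeriv μ₁
  set g : S → ℝ≥0∞ := fun y => min (f y) 1 with hg
  have hgmeas : Measurable g := hfmeas.min measurable_const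
  set ν : Measure S := μ₁.withDensity g with hν
  have hν_apply : ∀ A : Set S, MeasurableSet A → ν A = ∫⁻ y in A, g y ∂μ₁ :=
    fun A hA => withDensity_apply g hA
  have hν_le₁ : ν ≤ μ₁ := by
    refine Measure.le_iff.mpr fun A hA => ?_
    rw [hν_apply A hA]
    calc ∫⁻ y in A, g y ∂μ₁ ≤ ∫⁻ _ in A, 1 ∂μ₁ :=
      lintegral_mono fun y => min_le_right _ _
    _ = μ₁ A := by simp
  have hν_le₂ : ν ≤ μ₂ := by
    refine le_trans ?_ (Measure.withDensity_rnDeriv_le μ₂ μ₁)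
    exact withDensity_mono (Filter.Eventually.of_forall fun y => min_le_left _ _)
  haveI : IsFiniteMeasure ν := isFiniteMeasure_of_le μ₁ hν_le₁
  set α : ℝ≥0∞ := ∫⁻ y, g y ∂μ₁ with hα
  have hνuniv : ν Set.univ = α := by
    rw [hν_apply _ MeasurableSet.univ, Measure.restrict_univ]
  have hα_le : α ≤ 1 := by
    calc α ≤ ∫⁻ _, 1 ∂μ₁ := lintegral_mono fun y => min_le_right _ _
    _ = 1 := by simp
  have hdmeas : Measurable fun x : S => (x, x) := measurable_id.prodMk measurable_id
  set d : Measure (S × S) := Measure.map (fun x => (x, x)) ν with hd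
  have hd_diag : d {p : S × S | p.1 = p.2} = α := by
    rw [Measure.map_apply hdmeas hdiag]
    have : (fun x : S => (x, x)) ⁻¹' {p : S × S | p.1 = p.2} = Set.univ := by
      ext x; simp
    rw [this, hνuniv]
  have hd_fst : ∀ A : Set S, MeasurableSet A → d (A ×ˢ Set.univ) = ν A := by
    intro A hA
    rw [Measure.map_apply hdmeas (hA.prod MeasurableSet.univ)]
    congr 1
    ext x; simp
  have hd_snd : ∀ A : Set S, MeasurableSet A → d (Set.univ ×ˢ A) = ν A := by
    intro A hA
    rw [Measure.map_apply hdmeas (MeasurableSet.univ.prod hA)]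
    congr 1
    ext x; simp
  by_cases hα1 : α = 1
  · -- ν = μ₁ = μ₂
    have hν₁ : ν = μ₁ := measure_eq_of_le_of_univ_eq hν_le₁ (by simp [hνuniv, hα1])
    have hν₂ : ν = μ₂ := measure_eq_of_le_of_univ_eq hν_le₂ (by simp [hνuniv, hα1])
    refine ⟨d, ⟨?_⟩, ?_, ?_, ?_⟩
    · rw [Measure.map_apply hdmeas MeasurableSet.univ]
      simp [hν₁]
    · intro A hA; rw [hd_fst A hA, hν₁]
    · intro A hA; rw [hd_snd A hA, hν₂]
    · rw [hd_diag]
  · -- α < 1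
    set κ₁ : Measure S := μ₁ - ν with hκ₁
    set κ₂ : Measure S := μ₂ - ν with hκ₂
    haveI : IsFiniteMeasure κ₁ := isFiniteMeasure_of_le μ₁ Measure.sub_le
    haveI : IsFiniteMeasure κ₂ := isFiniteMeasure_of_le μ₂ Measure.sub_le
    have hκ₁_apply : ∀ A : Set S, MeasurableSet A → κ₁ A = μ₁ A - ν A :=
      fun A hA => Measure.sub_apply hA hν_le₁
    have hκ₂_apply : ∀ A : Set S, MeasurableSet A → κ₂ A = μ₂ A - ν A :=
      fun A hA => Measure.sub_apply hA hν_le₂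
    have hκ₁univ : κ₁ Set.univ = 1 - α := by
      rw [hκ₁_apply _ MeasurableSet.univ, hνuniv, measure_univ]
    have hκ₂univ : κ₂ Set.univ = 1 - α := by
      rw [hκ₂_apply _ MeasurableSet.univ, hνuniv, measure_univ]
    have h1α_ne : (1 : ℝ≥0∞) - α ≠ 0 := by
      simp only [ne_eq, tsub_eq_zero_iff_le, not_le]
      exact lt_of_le_of_ne hα_le hα1
    have h1α_top : (1 : ℝ≥0∞) - α ≠ ⊤ := by
      exact (lt_of_le_of_lt tsub_le_self one_lt_top).ne
    set c : ℝ≥0∞ := (1 - α)⁻¹ with hc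
    have hc_mul : c * (1 - α) = 1 := ENNReal.inv_mul_cancel h1α_ne h1α_top
    set π : Measure (S × S) := d + c • (κ₁.prod κ₂) with hπ
    -- singularity: diagonal is null for κ₁.prod κ₂
    obtain ⟨T, hTm, hT0, hTc0⟩ := Measure.mutuallySingular_singularPart μ₂ μ₁
    -- (μ₂.singularPart μ₁) T = 0, μ₁ Tᶜ = 0
    set G : Set S := {x | f x < 1} with hG
    have hGm : MeasurableSet G := measurableSet_lt hfmeas measurable_const
    set E : Set S := G ∩ T with hE
    have hEm : MeasurableSet E := hGm.inter hTm
    have hκ₁E : κ₁ Eᶜ = 0 := by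
      have hsub : Eᶜ ⊆ Gᶜ ∪ Tᶜ := by
        rw [hE, Set.compl_inter]
      refine measure_mono_null hsub ?_
      refine measure_union_null ?_ ?_
      · rw [hκ₁_apply _ hGm.compl]
        have : ν Gᶜ = μ₁ Gᶜ := by
          rw [hν_apply _ hGm.compl]
          have : ∀ x ∈ Gᶜ, g x = 1 := by
            intro x hx
            simp only [hG, Set.mem_compl_iff, Set.mem_setOf_eq, not_lt] at hx
            simp [hg, min_eq_right hx]
          rw [setLIntegral_congr_fun hGm.compl this]
          simp
        rw [this, tsub_self]
      · have h1 : κ₁ Tᶜ ≤ μ₁ Tᶜ := Measure.sub_le Tᶜ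
        rw [hTc0] at h1
        exact le_antisymm h1 zero_le
    have hκ₂E : κ₂ E = 0 := by
      rw [hκ₂_apply _ hEm]
      have hdecomp : μ₂ E = (μ₂.singularPart μ₁) E + ∫⁻ y in E, f y ∂μ₁ := by
        conv_lhs => rw [μ₂.haveLebesgueDecomposition_add μ₁]
        rw [Measure.add_apply, withDensity_apply _ hEm]
      have hsing : (μ₂.singularPart μ₁) E = 0 :=
        measure_mono_null (Set.inter_subset_right) hT0
      have hνE : ν E = ∫⁻ y in E, f y ∂μ₁ := by
        rw [hν_apply _ hEm]
        refine setLIntegral_congr_fun hEm ?_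
        intro x hx
        have : f x < 1 := hx.1
        simp [hg, min_eq_left this.le]
      rw [hdecomp, hsing, zero_add, hνE, tsub_self]
    have hprod_diag : (κ₁.prod κ₂) {p : S × S | p.1 = p.2} = 0 := by
      have hsub : {p : S × S | p.1 = p.2} ⊆ (Eᶜ ×ˢ Set.univ) ∪ (E ×ˢ E) := by
        rintro ⟨x, y⟩ (h : x = y)
        by_cases hx : x ∈ E
        · right; exact ⟨hx, h ▸ hx⟩
        · left; exact ⟨hx, Set.mem_univ _⟩
      refine measure_mono_null hsub (measure_union_null ?_ ?_)
      · rw [Measure.prod_prod, hκ₁E, zero_mul]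
      · rw [Measure.prod_prod, hκ₂E, mul_zero]
    -- marginals of the product part
    have hprod_fst : ∀ A : Set S, MeasurableSet A →
        (c • (κ₁.prod κ₂)) (A ×ˢ Set.univ) = κ₁ A := by
      intro A hA
      rw [Measure.smul_apply, smul_eq_mul, Measure.prod_prod, hκ₂univ,
        ← mul_assoc, mul_comm c, mul_assoc, hc_mul, mul_one]
    have hprod_snd : ∀ A : Set S, MeasurableSet A →
        (c • (κ₁.prod κ₂)) (Set.univ ×ˢ A) = κ₂ A := by
      intro A hA
      rw [Measure.smul_apply, smul_eq_mul, Measure.prod_prod, hκ₁univ,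
        ← mul_assoc, hc_mul, one_mul]
    have hfst : ∀ A : Set S, MeasurableSet A → π (A ×ˢ Set.univ) = μ₁ A := by
      intro A hA
      rw [hπ, Measure.add_apply, hd_fst A hA, hprod_fst A hA, hκ₁_apply A hA,
        add_tsub_cancel_of_le (hν_le₁ A)]
    have hsnd : ∀ A : Set S, MeasurableSet A → π (Set.univ ×ˢ A) = μ₂ A := by
      intro A hA
      rw [hπ, Measure.add_apply, hd_snd A hA, hprod_snd A hA, hκ₂_apply A hA,
        add_tsub_cancel_of_le (hν_le₂ A)]
    refine ⟨π, ⟨?_⟩, hfst, hsnd, ?_⟩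
    · have := hfst Set.univ MeasurableSet.univ
      rw [Set.univ_prod_univ] at this
      rw [this, measure_univ]
    · rw [hπ, Measure.add_apply, hd_diag, Measure.smul_apply, smul_eq_mul,
        hprod_diag, mul_zero, add_zero]
end

section
/- Let S be a finite set with at least two elements and let P be a row-stochastic S × S real matrix which is primitive, i.e., there exists k ≥ 1 such that every entry of P^k is strictly positive. Let μ be an invariant probability vector for P (μ has nonnegative entries summing to 1 and μ P = μ), and let λ₂ := max{|z| : z ∈ ℂ is an eigenvalue of P and z ≠ 1}. Then for every x ∈ S, limsup_{n→∞} (Σ_{y∈S} |(P^n)(x, y) − μ(y)|)^{1/n} ≤ λ₂. -/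
open Filter

open scoped Topology ENNReal NNReal

attribute [local instance] Matrix.linftyOpNormedRing Matrix.linftyOpNormedAlgebra

/-- Equality case of the triangle inequality for convex combinations:
if a convex combination with strictly positive weights of points in the disk of
radius `|v x₀|` equals `v x₀`, then all points equal `v x₀`. -/
lemma aux_const_eig {S : Type*} [Fintype S] (w : S → ℝ) (hw : ∀ y, 0 < w y)
    (hw1 : ∑ y, w y = 1) (v : S → ℂ) (x₀ : S)
    (hmax : ∀ y, ‖v y‖ ≤ ‖v x₀‖)
    (heq : ∑ y, (w y : ℂ) * v y = v x₀) : ∀ y, v y = v x₀ := by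
  set M : ℝ := ‖v x₀‖ with hM
  set f : S → ℝ := fun y => ((starRingEnd ℂ) (v x₀) * v y).re with hf
  have hconj : (starRingEnd ℂ) (v x₀) * v x₀ = ((M ^ 2 : ℝ) : ℂ) := by
    rw [mul_comm, Complex.mul_conj, Complex.normSq_eq_norm_sq]
  have hfle : ∀ y, f y ≤ M ^ 2 := by
    intro y
    calc f y ≤ ‖(starRingEnd ℂ) (v x₀) * v y‖ := Complex.re_le_norm _
    _ = M * ‖v y‖ := by rw [norm_mul, Complex.norm_conj]
    _ ≤ M * M := mul_le_mul_of_nonneg_left (hmax y) (norm_nonneg _)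
    _ = M ^ 2 := (sq M).symm
  have hsum : ∑ y, w y * f y = M ^ 2 := by
    have h1 : ∑ y, w y * f y = ((starRingEnd ℂ) (v x₀) * ∑ y, (w y : ℂ) * v y).re := by
      rw [Finset.mul_sum, Complex.re_sum]
      refine Finset.sum_congr rfl fun y _ => ?_
      rw [hf, show (starRingEnd ℂ) (v x₀) * ((w y : ℂ) * v y)
          = (w y : ℂ) * ((starRingEnd ℂ) (v x₀) * v y) by ring, Complex.re_ofReal_mul]
    rw [h1, heq, hconj, Complex.ofReal_re]
  have hfeq : ∀ y, f y = M ^ 2 := by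
    have h0 : ∑ y, w y * (M ^ 2 - f y) = 0 := by
      simp only [mul_sub]
      rw [Finset.sum_sub_distrib, ← Finset.sum_mul, hw1, one_mul, hsum, sub_self]
    intro y
    have h2 := (Finset.sum_eq_zero_iff_of_nonneg (fun i _ =>
      mul_nonneg (hw i).le (sub_nonneg.mpr (hfle i)))).mp h0 y (Finset.mem_univ y)
    have h3 := (mul_eq_zero.mp h2).resolve_left (hw y).ne'
    linarith
  intro y
  have habs : ‖(starRingEnd ℂ) (v x₀) * v y‖ ≤ M ^ 2 := by
    rw [norm_mul, Complex.norm_conj, sq]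
    exact mul_le_mul_of_nonneg_left (hmax y) (norm_nonneg _)
  have him : ((starRingEnd ℂ) (v x₀) * v y).im = 0 := by
    have h1 := Complex.sq_norm ((starRingEnd ℂ) (v x₀) * v y)
    have h2 : (‖(starRingEnd ℂ) (v x₀) * v y‖) ^ 2 ≤ (M ^ 2) ^ 2 :=
      pow_le_pow_left₀ (norm_nonneg _) habs 2
    have h3 := hfeq y
    rw [hf] at h3
    nlinarith [Complex.normSq_apply ((starRingEnd ℂ) (v x₀) * v y),
      sq_nonneg (((starRingEnd ℂ) (v x₀) * v y).im)]
  by_cases h0 : v x₀ = 0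
  · have h4 : ‖v y‖ ≤ 0 := by simpa [h0, hM] using hmax y
    have h5 : ‖v y‖ = 0 := le_antisymm h4 (norm_nonneg _)
    rw [norm_eq_zero] at h5
    rw [h5, h0]
  · have hu : (starRingEnd ℂ) (v x₀) * v y = (starRingEnd ℂ) (v x₀) * v x₀ := by
      rw [hconj]
      apply Complex.ext
      · have h6 := hfeq y; rw [hf] at h6; simpa [← Complex.ofReal_pow] using h6
      · simpa [← Complex.ofReal_pow] using him
    exact mul_left_cancel₀ (by simpa using h0) hu

/-- **Gantmacher's second-eigenvalue bound (corollary form).**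
For a primitive row-stochastic matrix `P` with invariant probability
vector `μ`, the total variation distance `∑_y |(P^n)(x,y) - μ(y)|`
decays at exponential rate at most
`λ₂ := max{|z| : z complex eigenvalue of P, z ≠ 1}`. -/
theorem second_eigenvalue_rate
    {S : Type*} [Fintype S] [DecidableEq S] [Nontrivial S]
    (P : Matrix S S ℝ)
    (hnonneg : ∀ x y, 0 ≤ P x y) (hrow : ∀ x, ∑ y, P x y = 1)
    (hprim : ∃ k : ℕ, 1 ≤ k ∧ ∀ x y, 0 < (P ^ k) x y)
    (μ : S → ℝ) (hμ0 : ∀ y, 0 ≤ μ y) (hμ1 : ∑ y, μ y = 1)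
    (hinv : ∀ y, ∑ x, μ x * P x y = μ y)
    (lam₂ : ℝ)
    (hlam₂ : lam₂ = sSup {r : ℝ | ∃ z : ℂ, z ≠ 1 ∧
      (∃ v : S → ℂ, v ≠ 0 ∧ (P.map (fun a => (a : ℂ))).mulVec v = z • v) ∧
      ‖z‖ = r}) :
    ∀ x : S,
      limsup (fun n : ℕ => (∑ y, |(P ^ n) x y - μ y|) ^ ((n : ℝ)⁻¹)) atTop
        ≤ lam₂ := by
  haveI : CompleteSpace (Matrix S S ℂ) := FiniteDimensional.complete ℂ _
  obtain ⟨k, hk1, hkpos⟩ := hprim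
  set P' : Matrix S S ℂ := P.map (fun a => (a : ℂ)) with hP'
  set E' : Matrix S S ℂ := Matrix.of (fun _ y => ((μ y : ℝ) : ℂ)) with hE'
  set Q' : Matrix S S ℂ := P' - E' with hQ'
  -- mapped powers
  have hmappow : ∀ n : ℕ, P' ^ n = (P ^ n).map (fun a => (a : ℂ)) := by
    intro n
    have h : P' = Complex.ofRealHom.mapMatrix P := rfl
    rw [h, ← map_pow]; rfl
  -- row sums of powers
  have hrowpow : ∀ n : ℕ, ∀ x, ∑ y, (P ^ n) x y = 1 := by
    intro n
    induction n with
    | zero => intro x; simp [Matrix.one_apply]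
    | succ n ih =>
      intro x
      simp_rw [pow_succ', Matrix.mul_apply]
      rw [Finset.sum_comm]
      simp_rw [← Finset.mul_sum, ih, mul_one]
      exact hrow x
  -- matrix identities over ℂ
  have hP'E' : P' * E' = E' := by
    ext x y
    simp only [Matrix.mul_apply, hP', hE', Matrix.map_apply, Matrix.of_apply]
    rw [← Finset.sum_mul]
    have : ∑ z, ((P x z : ℝ) : ℂ) = 1 := by exact_mod_cast congrArg (fun r : ℝ => (r : ℂ)) (hrow x)
    rw [this, one_mul]
  have hE'P' : E' * P' = E' := by
    ext x y
    simp only [Matrix.mul_apply, hP', hE', Matrix.map_apply, Matrix.of_apply]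
    have := hinv y
    push_cast
    exact_mod_cast congrArg (fun r : ℝ => (r : ℂ)) this
  have hE'E' : E' * E' = E' := by
    ext x y
    simp only [Matrix.mul_apply, hE', Matrix.of_apply]
    rw [← Finset.sum_mul]
    have : ∑ z, ((μ z : ℝ) : ℂ) = 1 := by exact_mod_cast congrArg (fun r : ℝ => (r : ℂ)) hμ1
    rw [this, one_mul]
  have hPnE : ∀ n : ℕ, P' ^ n * E' = E' := by
    intro n
    induction n with
    | zero => rw [pow_zero, one_mul]
    | succ n ih => rw [pow_succ, mul_assoc, hP'E', ih]
  have hQpow : ∀ n : ℕ, 1 ≤ n → Q' ^ n = P' ^ n - E' := by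
    intro n hn
    induction n, hn using Nat.le_induction with
    | base => rw [pow_one, pow_one]
    | succ n hn ih =>
      rw [pow_succ, ih, hQ', sub_mul, mul_sub, mul_sub, hPnE, hE'P', hE'E', ← pow_succ]
      abel
  -- lam₂ is nonneg
  have hlam₂0 : 0 ≤ lam₂ := by
    rw [hlam₂]
    exact Real.sSup_nonneg fun r hr => by
      obtain ⟨z, -, -, rfl⟩ := hr; exact norm_nonneg z
  -- the set is bounded above by 1
  have hbddT : BddAbove {r : ℝ | ∃ z : ℂ, z ≠ 1 ∧
      (∃ v : S → ℂ, v ≠ 0 ∧ (P.map (fun a => (a : ℂ))).mulVec v = z • v) ∧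
      ‖z‖ = r} := by
    refine ⟨1, fun r hr => ?_⟩
    obtain ⟨z, hz1, ⟨v, hv0, hv⟩, rfl⟩ := hr
    obtain ⟨x₀, -, hx₀⟩ := Finset.exists_max_image Finset.univ
      (fun x => ‖v x‖) ⟨Classical.arbitrary S, Finset.mem_univ _⟩
    have hx₀' : ∀ y, ‖v y‖ ≤ ‖v x₀‖ := fun y =>
      hx₀ y (Finset.mem_univ y)
    have hvx₀ : 0 < ‖v x₀‖ := by
      obtain ⟨x1, hx1⟩ := Function.ne_iff.mp hv0
      exact lt_of_lt_of_le (by simpa using (norm_pos_iff.mpr hx1)) (hx₀' x1)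
    have key : ‖z‖ * ‖v x₀‖ ≤ 1 * ‖v x₀‖ := by
      have h1 : (P.map (fun a => (a : ℂ))).mulVec v x₀ = z * v x₀ := by rw [hv]; rfl
      calc ‖z‖ * ‖v x₀‖ = ‖z * v x₀‖ := (norm_mul _ _).symm
      _ = ‖∑ y, ((P x₀ y : ℝ) : ℂ) * v y‖ := by
          rw [← h1]; simp [Matrix.mulVec, dotProduct, Matrix.map_apply]
      _ ≤ ∑ y, ‖((P x₀ y : ℝ) : ℂ) * v y‖ := norm_sum_le _ _
      _ = ∑ y, P x₀ y * ‖v y‖ := by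
          refine Finset.sum_congr rfl fun y _ => ?_
          rw [norm_mul, Complex.norm_real, Real.norm_eq_abs, abs_of_nonneg (hnonneg x₀ y)]
      _ ≤ ∑ y, P x₀ y * ‖v x₀‖ := Finset.sum_le_sum fun y _ =>
          mul_le_mul_of_nonneg_left (hx₀' y) (hnonneg x₀ y)
      _ = 1 * ‖v x₀‖ := by rw [← Finset.sum_mul, hrow]
    exact le_of_mul_le_mul_right key hvx₀
  -- every spectral value of Q' has modulus at most lam₂
  have hspec : ∀ z ∈ spectrum ℂ Q', ‖z‖ ≤ lam₂ := by
    intro z hz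
    by_cases hz0 : z = 0
    · simpa [hz0] using hlam₂0
    -- extract eigenvector
    rw [spectrum.mem_iff, Matrix.isUnit_iff_isUnit_det, isUnit_iff_ne_zero, not_not] at hz
    obtain ⟨v, hv0, hv⟩ := (Matrix.exists_mulVec_eq_zero_iff).mpr hz
    have hveig : Q'.mulVec v = z • v := by
      rw [Matrix.sub_mulVec, sub_eq_zero] at hv
      rw [← hv, Algebra.algebraMap_eq_smul_one, Matrix.smul_mulVec, Matrix.one_mulVec]
    -- μᵀ v = 0
    have hQcol : ∀ y, ∑ x, ((μ x : ℝ) : ℂ) * Q' x y = 0 := by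
      intro y
      have h1 : ∀ x, ((μ x : ℝ) : ℂ) * Q' x y
          = ((μ x : ℝ) : ℂ) * ((P x y : ℝ) : ℂ) - ((μ x : ℝ) : ℂ) * ((μ y : ℝ) : ℂ) := by
        intro x
        rw [hQ', Matrix.sub_apply, hP', hE', Matrix.map_apply, Matrix.of_apply]
        ring
      simp_rw [h1]
      rw [Finset.sum_sub_distrib, ← Finset.sum_mul]
      have h2 : ∑ x, ((μ x : ℝ) : ℂ) * ((P x y : ℝ) : ℂ) = ((μ y : ℝ) : ℂ) := by
        exact_mod_cast congrArg (fun r : ℝ => (r : ℂ)) (hinv y)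
      have h3 : ∑ x, ((μ x : ℝ) : ℂ) = 1 := by
        exact_mod_cast congrArg (fun r : ℝ => (r : ℂ)) hμ1
      rw [h2, h3, one_mul, sub_self]
    have ht : ∑ x, ((μ x : ℝ) : ℂ) * v x = 0 := by
      have h1 : ∑ x, ((μ x : ℝ) : ℂ) * (Q'.mulVec v x) = z * ∑ x, ((μ x : ℝ) : ℂ) * v x := by
        rw [Finset.mul_sum]
        refine Finset.sum_congr rfl fun x _ => ?_
        rw [hveig]; simp [Pi.smul_apply, smul_eq_mul]; ring
      have h2 : ∑ x, ((μ x : ℝ) : ℂ) * (Q'.mulVec v x) = 0 := by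
        simp_rw [Matrix.mulVec, dotProduct, Finset.mul_sum]
        rw [Finset.sum_comm]
        refine Finset.sum_eq_zero fun y _ => ?_
        have := hQcol y
        calc ∑ x, ((μ x : ℝ) : ℂ) * (Q' x y * v y)
            = (∑ x, ((μ x : ℝ) : ℂ) * Q' x y) * v y := by
              rw [Finset.sum_mul]; exact Finset.sum_congr rfl fun x _ => by ring
        _ = 0 := by rw [this, zero_mul]
      have := h1.symm.trans h2
      rcases mul_eq_zero.mp this with h | h
      · exact absurd h hz0
      · exact h
    -- eigenvector of P'
    have hPeig : P'.mulVec v = z • v := by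
      have hQE : Q' + E' = P' := by rw [hQ']; abel
      have hE'v : E'.mulVec v = 0 := by
        funext x
        simp only [Matrix.mulVec, dotProduct, hE', Matrix.of_apply, Pi.zero_apply]
        exact ht
      rw [← hQE, Matrix.add_mulVec, hveig, hE'v, add_zero]
    -- z ≠ 1
    have hz1 : z ≠ 1 := by
      rintro rfl
      have hveq : P'.mulVec v = v := by rw [hPeig, one_smul]
      have hvk : (P' ^ k).mulVec v = v := by
        clear hkpos hk1
        induction k with
        | zero => rw [pow_zero, Matrix.one_mulVec]
        | succ k ih => rw [pow_succ, ← Matrix.mulVec_mulVec, hveq, ih]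
      obtain ⟨x₀, -, hx₀⟩ := Finset.exists_max_image Finset.univ
        (fun x => ‖v x‖) ⟨Classical.arbitrary S, Finset.mem_univ _⟩
      have hx₀' : ∀ y, ‖v y‖ ≤ ‖v x₀‖ := fun y =>
        hx₀ y (Finset.mem_univ y)
      have heq : ∑ y, (((P ^ k) x₀ y : ℝ) : ℂ) * v y = v x₀ := by
        have := congrFun hvk x₀
        rw [hmappow] at this
        simpa [Matrix.mulVec, dotProduct, Matrix.map_apply] using this
      have hconst := aux_const_eig (fun y => (P ^ k) x₀ y) (hkpos x₀) (hrowpow k x₀)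
        v x₀ hx₀' heq
      have hvx₀ : v x₀ ≠ 0 := by
        intro h
        exact hv0 (funext fun y => by rw [hconst y, h, Pi.zero_apply])
      have : (0 : ℂ) = v x₀ := by
        rw [← ht]
        calc ∑ x, ((μ x : ℝ) : ℂ) * v x = ∑ x, ((μ x : ℝ) : ℂ) * v x₀ :=
              Finset.sum_congr rfl fun x _ => by rw [hconst x]
        _ = (∑ x, ((μ x : ℝ) : ℂ)) * v x₀ := (Finset.sum_mul _ _ _).symm
        _ = v x₀ := by
            rw [show ∑ x, ((μ x : ℝ) : ℂ) = 1 from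
              by exact_mod_cast congrArg (fun r : ℝ => (r : ℂ)) hμ1, one_mul]
      exact hvx₀ this.symm
    rw [hlam₂]
    exact le_csSup hbddT ⟨z, hz1, ⟨v, hv0, hPeig⟩, rfl⟩
  -- spectral radius bound
  have hρ : spectralRadius ℂ Q' ≤ ENNReal.ofReal lam₂ := by
    rw [spectralRadius]
    refine iSup₂_le fun z hz => ?_
    rw [show ((‖z‖₊ : ℝ≥0∞)) = ENNReal.ofReal ‖z‖ from (ofReal_norm z).symm]
    exact ENNReal.ofReal_le_ofReal (by exact hspec z hz)
  have hgel := spectrum.pow_norm_pow_one_div_tendsto_nhds_spectralRadius Q'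
  intro x
  refine le_of_forall_pos_le_add fun ε hε => ?_
  have hlt : spectralRadius ℂ Q' < ENNReal.ofReal (lam₂ + ε) :=
    lt_of_le_of_lt hρ ((ENNReal.ofReal_lt_ofReal_iff (by linarith)).mpr (by linarith))
  have hev := hgel.eventually_lt_const hlt
  have hev2 : ∀ᶠ n : ℕ in atTop,
      (∑ y, |(P ^ n) x y - μ y|) ^ ((n : ℝ)⁻¹) ≤ lam₂ + ε := by
    filter_upwards [hev, eventually_ge_atTop 1] with n hn hn1
    have hnorm : ‖Q' ^ n‖ ^ (1 / (n : ℝ)) < lam₂ + ε := by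
      rwa [ENNReal.ofReal_lt_ofReal_iff (by linarith)] at hn
    have hsum_le : ∑ y, |(P ^ n) x y - μ y| ≤ ‖Q' ^ n‖ := by
      have hqe : Q' ^ n = ((P ^ n).map (fun a => (a : ℂ))) - E' := by
        rw [hQpow n hn1, hmappow]
      have h1 : (∑ y, ‖(Q' ^ n) x y‖₊) ≤ ‖Q' ^ n‖₊ := by
        rw [Matrix.linfty_opNNNorm_def]
        exact Finset.le_sup (f := fun i => ∑ j, ‖(Q' ^ n) i j‖₊) (Finset.mem_univ x)
      calc ∑ y, |(P ^ n) x y - μ y| = ∑ y, ‖(Q' ^ n) x y‖ := by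
            refine Finset.sum_congr rfl fun y _ => ?_
            rw [hqe]
            simp only [Matrix.sub_apply, Matrix.map_apply, hE', Matrix.of_apply]
            rw [← Complex.ofReal_sub, Complex.norm_real, Real.norm_eq_abs]
      _ ≤ ‖Q' ^ n‖ := by
            have := h1
            rw [← NNReal.coe_le_coe] at this
            simpa [NNReal.coe_sum] using this
    calc (∑ y, |(P ^ n) x y - μ y|) ^ ((n : ℝ)⁻¹)
        ≤ ‖Q' ^ n‖ ^ ((n : ℝ)⁻¹) :=
          Real.rpow_le_rpow (Finset.sum_nonneg fun y _ => abs_nonneg _) hsum_le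
            (by positivity)
    _ = ‖Q' ^ n‖ ^ (1 / (n : ℝ)) := by rw [one_div]
    _ ≤ lam₂ + ε := hnorm.le
  exact limsup_le_of_le (isCoboundedUnder_le_of_le atTop (fun n =>
    Real.rpow_nonneg (Finset.sum_nonneg fun y _ => abs_nonneg _) _)) hev2
end

section
/- Let S be a finite set with at least two elements and P a row-stochastic S × S real matrix, and fix m ≥ 1. Then for every n ≥ 1 and every pair x1, x2 ∈ S with x1 ≠ x2, max_{A ⊆ S} (P^{nm}(x1, A) − P^{nm}(x2, A)) ≤ ((V^{(m)})^n 𝟙)(x1, x2), where 𝟙 is the all-ones vector on S × S; equivalently, (1/2) Σ_{y∈S} |(P^{nm})(x1, y) − (P^{nm})(x2, y)| ≤ ((V^{(m)})^n 𝟙)(x1, x2). -/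
/-- The `overlap coefficient` of rows `x1` and `x2` of the matrix `Q`:
`α(x1,x2) := ∑_y min(Q(x1,y), Q(x2,y))`. -/
noncomputable def mdCoeff {S : Type*} [Fintype S] (Q : Matrix S S ℝ) (x1 x2 : S) : ℝ :=
  ∑ y, min (Q x1 y) (Q x2 y)

/-- The coupling matrix `V` associated with the transition matrix `Q`, indexed
by pairs of states. -/
noncomputable def couplingMatrix {S : Type*} [Fintype S] [DecidableEq S]
    (Q : Matrix S S ℝ) : Matrix (S × S) (S × S) ℝ :=
  fun p q =>
    if p.1 = p.2 ∨ mdCoeff Q p.1 p.2 = 1 then 0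
    else (Q p.1 q.1 - min (Q p.1 q.1) (Q p.2 q.1)) *
         (Q p.2 q.2 - min (Q p.1 q.2) (Q p.2 q.2)) / (1 - mdCoeff Q p.1 p.2)

section Aux

set_option linter.unusedSectionVars false

open Finset Matrix

variable {S : Type*} [Fintype S] [DecidableEq S]

lemma pow_entry_nonneg (P : Matrix S S ℝ) (h : ∀ x y, 0 ≤ P x y) (k : ℕ) :
    ∀ x y, 0 ≤ (P ^ k) x y := by
  induction k with
  | zero => intro x y; rw [pow_zero, Matrix.one_apply]; split <;> norm_num
  | succ k ih =>
    intro x y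
    rw [pow_succ, Matrix.mul_apply]
    exact Finset.sum_nonneg fun z _ => mul_nonneg (ih x z) (h z y)

lemma pow_row_sum (P : Matrix S S ℝ) (h : ∀ x, ∑ y, P x y = 1) (k : ℕ) :
    ∀ x, ∑ y, (P ^ k) x y = 1 := by
  induction k with
  | zero => intro x; simp [Matrix.one_apply]
  | succ k ih =>
    intro x
    simp only [pow_succ, Matrix.mul_apply]
    rw [Finset.sum_comm]
    calc ∑ z, ∑ y, (P ^ k) x z * P z y = ∑ z, (P ^ k) x z * ∑ y, P z y := by
          simp [Finset.mul_sum]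
      _ = 1 := by simp only [h, mul_one]; exact ih x

lemma mdCoeff_le_one (Q : Matrix S S ℝ) (hQ1 : ∀ x, ∑ y, Q x y = 1) (x1 x2 : S) :
    mdCoeff Q x1 x2 ≤ 1 := by
  unfold mdCoeff
  calc ∑ y, min (Q x1 y) (Q x2 y) ≤ ∑ y, Q x1 y :=
        Finset.sum_le_sum fun y _ => min_le_left _ _
    _ = 1 := hQ1 x1

lemma couplingMatrix_nonneg (Q : Matrix S S ℝ) (hQ0 : ∀ x y, 0 ≤ Q x y)
    (hQ1 : ∀ x, ∑ y, Q x y = 1) (p q : S × S) : 0 ≤ couplingMatrix Q p q := by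
  unfold couplingMatrix
  split
  · exact le_refl 0
  · rename_i hcond
    push_neg at hcond
    have hle : mdCoeff Q p.1 p.2 ≤ 1 := mdCoeff_le_one Q hQ1 p.1 p.2
    have hpos : 0 ≤ 1 - mdCoeff Q p.1 p.2 := by linarith
    exact div_nonneg (mul_nonneg
      (by rw [sub_nonneg]; exact min_le_left _ _)
      (by rw [sub_nonneg]; exact min_le_right _ _)) hpos

lemma couplingMatrix_pow_nonneg (Q : Matrix S S ℝ) (hQ0 : ∀ x y, 0 ≤ Q x y)
    (hQ1 : ∀ x, ∑ y, Q x y = 1) (n : ℕ) (p q : S × S) :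
    0 ≤ ((couplingMatrix Q) ^ n) p q := by
  induction n generalizing p q with
  | zero => rw [pow_zero, Matrix.one_apply]; split <;> norm_num
  | succ n ih =>
    rw [pow_succ, Matrix.mul_apply]
    exact Finset.sum_nonneg fun z _ =>
      mul_nonneg (ih p z) (couplingMatrix_nonneg Q hQ0 hQ1 z q)

lemma tv_le_one_aux (A : Matrix S S ℝ) (h0 : ∀ x y, 0 ≤ A x y)
    (h1 : ∀ x, ∑ y, A x y = 1) (x1 x2 : S) :
    (1 / 2 : ℝ) * ∑ y, |A x1 y - A x2 y| ≤ 1 := by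
  have hs : ∑ y, |A x1 y - A x2 y| ≤ ∑ y, (A x1 y + A x2 y) :=
    Finset.sum_le_sum fun y _ => by
      rw [abs_sub_le_iff]
      constructor <;> nlinarith [h0 x1 y, h0 x2 y]
  rw [Finset.sum_add_distrib, h1, h1] at hs
  linarith

/-- rows equal when overlap is 1 -/
lemma rows_eq_of_mdCoeff_one (Q : Matrix S S ℝ) (hQ0 : ∀ x y, 0 ≤ Q x y)
    (hQ1 : ∀ x, ∑ y, Q x y = 1) (x1 x2 : S) (h : mdCoeff Q x1 x2 = 1) :
    ∀ y, Q x1 y = Q x2 y := by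
  have h1 : ∀ y ∈ Finset.univ, min (Q x1 y) (Q x2 y) ≤ Q x1 y :=
    fun y _ => min_le_left _ _
  have h2 : ∀ y ∈ Finset.univ, min (Q x1 y) (Q x2 y) ≤ Q x2 y :=
    fun y _ => min_le_right _ _
  have e1 : ∑ y, min (Q x1 y) (Q x2 y) = ∑ y, Q x1 y := by rw [hQ1 x1]; exact h
  have e2 : ∑ y, min (Q x1 y) (Q x2 y) = ∑ y, Q x2 y := by rw [hQ1 x2]; exact h
  have q1 := (Finset.sum_eq_sum_iff_of_le h1).mp e1
  have q2 := (Finset.sum_eq_sum_iff_of_le h2).mp e2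
  intro y
  exact (q1 y (Finset.mem_univ y)).symm.trans (q2 y (Finset.mem_univ y))

/-- Main inductive bound. -/
lemma key_bound (Q : Matrix S S ℝ) (hQ0 : ∀ x y, 0 ≤ Q x y)
    (hQ1 : ∀ x, ∑ y, Q x y = 1) :
    ∀ n : ℕ, ∀ p : S × S,
      (1 / 2 : ℝ) * ∑ y, |(Q ^ n) p.1 y - (Q ^ n) p.2 y|
        ≤ ((couplingMatrix Q) ^ n).mulVec (fun _ => 1) p := by
  intro n
  induction n with
  | zero =>
    intro p
    rw [pow_zero, pow_zero, Matrix.one_mulVec]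
    exact tv_le_one_aux 1 (fun x y => by rw [Matrix.one_apply]; split <;> norm_num)
      (fun x => by simp [Matrix.one_apply]) p.1 p.2
  | succ n ih =>
    rintro ⟨x1, x2⟩
    show (1 / 2 : ℝ) * ∑ y, |(Q ^ (n + 1)) x1 y - (Q ^ (n + 1)) x2 y|
        ≤ ((couplingMatrix Q) ^ (n + 1)).mulVec (fun _ => 1) (x1, x2)
    have hRHS : ((couplingMatrix Q) ^ (n + 1)).mulVec (fun _ => 1) (x1, x2)
        = ∑ q, couplingMatrix Q (x1, x2) q
            * ((couplingMatrix Q) ^ n).mulVec (fun _ => 1) q := by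
      rw [pow_succ', ← Matrix.mulVec_mulVec]
      rfl
    have hVv : ∀ q : S × S, 0 ≤ ((couplingMatrix Q) ^ n).mulVec (fun _ => 1) q := by
      intro q
      exact Finset.sum_nonneg fun r _ =>
        mul_nonneg (couplingMatrix_pow_nonneg Q hQ0 hQ1 n q r) zero_le_one
    have hRHSnn : 0 ≤ ((couplingMatrix Q) ^ (n + 1)).mulVec (fun _ => 1) (x1, x2) := by
      rw [hRHS]
      exact Finset.sum_nonneg fun q _ =>
        mul_nonneg (couplingMatrix_nonneg Q hQ0 hQ1 _ _) (hVv q)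
    by_cases hd : x1 = x2
    · subst hd
      simpa using hRHSnn
    by_cases hα : mdCoeff Q x1 x2 = 1
    · -- rows equal, LHS = 0
      have heq := rows_eq_of_mdCoeff_one Q hQ0 hQ1 x1 x2 hα
      have hrows : ∀ y, (Q ^ (n + 1)) x1 y = (Q ^ (n + 1)) x2 y := by
        intro y
        rw [pow_succ', Matrix.mul_apply, Matrix.mul_apply]
        exact Finset.sum_congr rfl fun z _ => by rw [heq z]
      have hz : ∑ y, |(Q ^ (n + 1)) x1 y - (Q ^ (n + 1)) x2 y| = 0 := by
        apply Finset.sum_eq_zero; intro y _; rw [hrows y]; simp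
      rw [hz, mul_zero]
      exact hRHSnn
    · -- main case
      set a : S → ℝ := fun z => Q x1 z - min (Q x1 z) (Q x2 z) with ha_def
      set b : S → ℝ := fun z => Q x2 z - min (Q x1 z) (Q x2 z) with hb_def
      set c : ℝ := 1 - mdCoeff Q x1 x2 with hc_def
      have ha0 : ∀ z, 0 ≤ a z := fun z => by
        rw [ha_def]; simp only [sub_nonneg]; exact min_le_left _ _
      have hb0 : ∀ z, 0 ≤ b z := fun z => by
        rw [hb_def]; simp only [sub_nonneg]; exact min_le_right _ _
      have hc : 0 < c := by
        rcases lt_or_eq_of_le (mdCoeff_le_one Q hQ1 x1 x2) with h | h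
        · rw [hc_def]; linarith
        · exact absurd h hα
      have hsa : ∑ z, a z = c := by
        rw [ha_def, hc_def, Finset.sum_sub_distrib, hQ1 x1]; rfl
      have hsb : ∑ z, b z = c := by
        rw [hb_def, hc_def, Finset.sum_sub_distrib, hQ1 x2]; rfl
      have hV : ∀ q : S × S, couplingMatrix Q (x1, x2) q = a q.1 * b q.2 / c := by
        intro q
        unfold couplingMatrix
        rw [if_neg (by push_neg; exact ⟨hd, hα⟩)]
      -- key identity for each y
      have hdiff : ∀ y : S,
          c * ((Q ^ (n + 1)) x1 y - (Q ^ (n + 1)) x2 y)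
            = ∑ z1, ∑ z2, a z1 * b z2 * ((Q ^ n) z1 y - (Q ^ n) z2 y) := by
        intro y
        have e1 : ∑ z1, ∑ z2, a z1 * b z2 * ((Q ^ n) z1 y - (Q ^ n) z2 y)
            = (∑ z1, a z1 * (Q ^ n) z1 y) * (∑ z2, b z2)
              - (∑ z1, a z1) * (∑ z2, b z2 * (Q ^ n) z2 y) := by
          rw [Finset.sum_mul_sum, Finset.sum_mul_sum, ← Finset.sum_sub_distrib]
          refine Finset.sum_congr rfl fun z1 _ => ?_
          rw [← Finset.sum_sub_distrib]
          exact Finset.sum_congr rfl fun z2 _ => by ring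
        have e2 : (Q ^ (n + 1)) x1 y - (Q ^ (n + 1)) x2 y
            = (∑ z, a z * (Q ^ n) z y) - ∑ z, b z * (Q ^ n) z y := by
          rw [pow_succ', Matrix.mul_apply, Matrix.mul_apply,
            ← Finset.sum_sub_distrib, ← Finset.sum_sub_distrib]
          refine Finset.sum_congr rfl fun z _ => ?_
          rw [ha_def, hb_def]; ring
        rw [e1, hsa, hsb, e2]
        ring
      -- bound for each y
      have habs : ∀ y : S,
          c * |(Q ^ (n + 1)) x1 y - (Q ^ (n + 1)) x2 y|
            ≤ ∑ z1, ∑ z2, a z1 * b z2 * |(Q ^ n) z1 y - (Q ^ n) z2 y| := by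
        intro y
        calc c * |(Q ^ (n + 1)) x1 y - (Q ^ (n + 1)) x2 y|
            = |c * ((Q ^ (n + 1)) x1 y - (Q ^ (n + 1)) x2 y)| := by
              rw [abs_mul, abs_of_pos hc]
          _ = |∑ z1, ∑ z2, a z1 * b z2 * ((Q ^ n) z1 y - (Q ^ n) z2 y)| := by
              rw [hdiff y]
          _ ≤ ∑ z1, |∑ z2, a z1 * b z2 * ((Q ^ n) z1 y - (Q ^ n) z2 y)| :=
              Finset.abs_sum_le_sum_abs _ _
          _ ≤ ∑ z1, ∑ z2, a z1 * b z2 * |(Q ^ n) z1 y - (Q ^ n) z2 y| := by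
              refine Finset.sum_le_sum fun z1 _ => ?_
              refine (Finset.abs_sum_le_sum_abs _ _).trans ?_
              refine Finset.sum_le_sum fun z2 _ => ?_
              rw [abs_mul, abs_of_nonneg (mul_nonneg (ha0 z1) (hb0 z2))]
      -- sum over y
      have hsum : c * ∑ y, |(Q ^ (n + 1)) x1 y - (Q ^ (n + 1)) x2 y|
          ≤ ∑ z1, ∑ z2, a z1 * b z2 * ∑ y, |(Q ^ n) z1 y - (Q ^ n) z2 y| := by
        rw [Finset.mul_sum]
        calc ∑ y, c * |(Q ^ (n + 1)) x1 y - (Q ^ (n + 1)) x2 y|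
            ≤ ∑ y, ∑ z1, ∑ z2, a z1 * b z2 * |(Q ^ n) z1 y - (Q ^ n) z2 y| :=
              Finset.sum_le_sum fun y _ => habs y
          _ = ∑ z1, ∑ z2, a z1 * b z2 * ∑ y, |(Q ^ n) z1 y - (Q ^ n) z2 y| := by
              rw [Finset.sum_comm]
              refine Finset.sum_congr rfl fun z1 _ => ?_
              rw [Finset.sum_comm]
              exact Finset.sum_congr rfl fun z2 _ => by rw [Finset.mul_sum]
      -- combine with IH
      rw [hRHS]
      have step : ∑ q : S × S, (a q.1 * b q.2 / c)
            * ((1 / 2 : ℝ) * ∑ y, |(Q ^ n) q.1 y - (Q ^ n) q.2 y|)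
          ≤ ∑ q : S × S, couplingMatrix Q (x1, x2) q
            * ((couplingMatrix Q) ^ n).mulVec (fun _ => 1) q := by
        refine Finset.sum_le_sum fun q _ => ?_
        rw [hV q]
        exact mul_le_mul_of_nonneg_left (ih q)
          (div_nonneg (mul_nonneg (ha0 q.1) (hb0 q.2)) hc.le)
      refine le_trans ?_ step
      have expand : ∑ q : S × S, (a q.1 * b q.2 / c)
            * ((1 / 2 : ℝ) * ∑ y, |(Q ^ n) q.1 y - (Q ^ n) q.2 y|)
          = (1 / (2 * c)) * ∑ z1, ∑ z2, a z1 * b z2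
            * ∑ y, |(Q ^ n) z1 y - (Q ^ n) z2 y| := by
        rw [Fintype.sum_prod_type, Finset.mul_sum]
        refine Finset.sum_congr rfl fun z1 _ => ?_
        rw [Finset.mul_sum]
        refine Finset.sum_congr rfl fun z2 _ => ?_
        have hc' : c ≠ 0 := hc.ne'
        rw [div_mul_eq_mul_div, mul_comm (1/(2*c)), mul_div_assoc, mul_comm (1/2),
          mul_div_assoc, div_div]
        ring_nf
      rw [expand]
      calc (1 / 2 : ℝ) * ∑ y, |(Q ^ (n + 1)) x1 y - (Q ^ (n + 1)) x2 y|
          = (1 / (2 * c)) * (c * ∑ y, |(Q ^ (n + 1)) x1 y - (Q ^ (n + 1)) x2 y|) := by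
            field_simp
        _ ≤ (1 / (2 * c)) * ∑ z1, ∑ z2, a z1 * b z2
              * ∑ y, |(Q ^ n) z1 y - (Q ^ n) z2 y| :=
            mul_le_mul_of_nonneg_left hsum (by positivity)

end Aux

/-- **Coupling bound on total variation via iterates of `V^{(m)}`.**
For all `n ≥ 1` and `x1 ≠ x2`,
`max_{A ⊆ S} (P^{nm}(x1,A) - P^{nm}(x2,A)) ≤ ((V^{(m)})^n 𝟙)(x1,x2)`, and
equivalently `(1/2) ∑_y |(P^{nm})(x1,y) - (P^{nm})(x2,y)|` obeys the same
bound. -/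
theorem tv_le_couplingMatrix_iterate
    {S : Type*} [Fintype S] [DecidableEq S] [Nontrivial S]
    (P : Matrix S S ℝ)
    (hnonneg : ∀ x y, 0 ≤ P x y) (hrow : ∀ x, ∑ y, P x y = 1)
    (m : ℕ) (hm : 1 ≤ m) :
    ∀ n : ℕ, 1 ≤ n → ∀ x1 x2 : S, x1 ≠ x2 →
      (∀ A : Finset S,
          ∑ y ∈ A, (P ^ (n * m)) x1 y - ∑ y ∈ A, (P ^ (n * m)) x2 y
            ≤ ((couplingMatrix (P ^ m)) ^ n).mulVec (fun _ => 1) (x1, x2))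
      ∧ (1 / 2) * ∑ y, |(P ^ (n * m)) x1 y - (P ^ (n * m)) x2 y|
            ≤ ((couplingMatrix (P ^ m)) ^ n).mulVec (fun _ => 1) (x1, x2) := by
  intro n hn x1 x2 hx
  have hpow : P ^ (n * m) = (P ^ m) ^ n := by rw [mul_comm, pow_mul]
  have hQ0 : ∀ x y, 0 ≤ (P ^ m) x y := pow_entry_nonneg P hnonneg m
  have hQ1 : ∀ x, ∑ y, (P ^ m) x y = 1 := pow_row_sum P hrow m
  have key := key_bound (P ^ m) hQ0 hQ1 n (x1, x2)
  rw [← hpow] at key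
  constructor
  · intro A
    refine le_trans ?_ key
    have hsums : ∑ y, (P ^ (n * m)) x1 y = ∑ y, (P ^ (n * m)) x2 y := by
      rw [pow_row_sum P hrow (n * m) x1, pow_row_sum P hrow (n * m) x2]
    set f : S → ℝ := fun y => (P ^ (n * m)) x1 y with hf
    set g : S → ℝ := fun y => (P ^ (n * m)) x2 y with hg
    have hA : ∑ y ∈ A, f y - ∑ y ∈ A, g y = ∑ y ∈ A, (f y - g y) :=
      (Finset.sum_sub_distrib f g).symm
    have hcompl : ∑ y ∈ A, (f y - g y) + ∑ y ∈ Aᶜ, (f y - g y) = 0 := by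
      rw [Finset.sum_add_sum_compl, Finset.sum_sub_distrib]
      rw [hf, hg] at hsums ⊢
      rw [hsums, sub_self]
    have h3 : ∑ y ∈ A, (f y - g y) ≤ ∑ y ∈ A, |f y - g y| :=
      Finset.sum_le_sum fun y _ => le_abs_self _
    have h4 : -∑ y ∈ Aᶜ, (f y - g y) ≤ ∑ y ∈ Aᶜ, |f y - g y| := by
      rw [← Finset.sum_neg_distrib]
      exact Finset.sum_le_sum fun y _ => neg_le_abs _
    have h5 : ∑ y ∈ A, |f y - g y| + ∑ y ∈ Aᶜ, |f y - g y| = ∑ y, |f y - g y| :=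
      Finset.sum_add_sum_compl A _
    rw [hA]
    linarith
  · exact key
end

section
/- Let S be a finite set with at least two elements, P a row-stochastic S × S real matrix, μ an invariant probability vector for P (nonnegative entries summing to 1 with μ P = μ), and m ≥ 1. Let r(V^{(m)}) := max{|z| : z ∈ ℂ is an eigenvalue of V^{(m)}} and assume r(V^{(m)}) < 1. Then for every x ∈ S and every ε > 0 there exists N such that for all n ≥ N, Σ_{y∈S} |(P^n)(x, y) − μ(y)| ≤ (r(V^{(m)}) + ε)^{⌊n/m⌋}. -/
open Matrix Filter

namespace RateAux

variable {S : Type*} [Fintype S] [DecidableEq S]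

lemma pow_entry_nonneg (Q : Matrix S S ℝ) (h0 : ∀ x y, 0 ≤ Q x y) :
    ∀ k x y, 0 ≤ (Q ^ k) x y := by
  intro k
  induction k with
  | zero => intro x y; simp [Matrix.one_apply]; positivity
  | succ k ih =>
    intro x y
    rw [pow_succ, Matrix.mul_apply]
    exact Finset.sum_nonneg fun w _ => mul_nonneg (ih x w) (h0 w y)

lemma row_sum_pow (Q : Matrix S S ℝ) (h1 : ∀ x, ∑ y, Q x y = 1) :
    ∀ k x, ∑ y, (Q ^ k) x y = 1 := by
  intro k
  induction k with
  | zero => intro x; simp [Matrix.one_apply]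
  | succ k ih =>
    intro x
    simp only [pow_succ, Matrix.mul_apply]
    rw [Finset.sum_comm]
    calc ∑ w, ∑ y, (Q ^ k) x w * Q w y
        = ∑ w, (Q ^ k) x w * ∑ y, Q w y := by simp [Finset.mul_sum]
      _ = 1 := by simp [h1, ih]

lemma mdCoeff_le_one (Q : Matrix S S ℝ) (h1 : ∀ x, ∑ y, Q x y = 1) (x1 x2 : S) :
    mdCoeff Q x1 x2 ≤ 1 := by
  calc mdCoeff Q x1 x2 ≤ ∑ y, Q x1 y :=
        Finset.sum_le_sum fun y _ => min_le_left _ _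
    _ = 1 := h1 x1

lemma rows_eq_of_mdCoeff_one (Q : Matrix S S ℝ) (h1 : ∀ x, ∑ y, Q x y = 1) {x1 x2 : S}
    (h : mdCoeff Q x1 x2 = 1) : ∀ y, Q x1 y = Q x2 y := by
  have h1' : ∑ y, min (Q x1 y) (Q x2 y) = ∑ y, Q x1 y := by
    rw [h1]; exact h
  have h2' : ∑ y, min (Q x1 y) (Q x2 y) = ∑ y, Q x2 y := by
    rw [h1]; exact h
  have e1 := (Finset.sum_eq_sum_iff_of_le
    (fun y _ => min_le_left (Q x1 y) (Q x2 y))).mp h1'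
  have e2 := (Finset.sum_eq_sum_iff_of_le
    (fun y _ => min_le_right (Q x1 y) (Q x2 y))).mp h2'
  intro y
  have a1 := e1 y (Finset.mem_univ y)
  have a2 := e2 y (Finset.mem_univ y)
  linarith
  

lemma cm_nonneg (Q : Matrix S S ℝ) (h0 : ∀ x y, 0 ≤ Q x y) (h1 : ∀ x, ∑ y, Q x y = 1)
    (p q : S × S) : 0 ≤ couplingMatrix Q p q := by
  unfold couplingMatrix
  split
  · exact le_rfl
  · rename_i hcond
    push_neg at hcond
    apply div_nonneg
    · apply mul_nonneg <;> simp [sub_nonneg]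
    · have := mdCoeff_le_one Q h1 p.1 p.2
      cases lt_or_eq_of_le this with
      | inl h => linarith
      | inr h => exact absurd h hcond.2


lemma rows_eq_pow_succ (Q : Matrix S S ℝ) {x1 x2 : S} (h : ∀ y, Q x1 y = Q x2 y) (k : ℕ) :
    ∀ z, (Q ^ (k + 1)) x1 z = (Q ^ (k + 1)) x2 z := by
  intro z
  rw [pow_succ', Matrix.mul_apply, Matrix.mul_apply]
  exact Finset.sum_congr rfl fun w _ => by rw [h w]

lemma key_identity (Q : Matrix S S ℝ) (h1 : ∀ x, ∑ y, Q x y = 1) (k : ℕ) (p : S × S)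
    (hp0 : ¬(p.1 = p.2 ∨ mdCoeff Q p.1 p.2 = 1)) (z : S) :
    ∑ q : S × S, couplingMatrix Q p q * ((Q ^ k) q.1 z - (Q ^ k) q.2 z)
      = (Q ^ (k + 1)) p.1 z - (Q ^ (k + 1)) p.2 z := by
  have hp := hp0
  push_neg at hp
  set c := 1 - mdCoeff Q p.1 p.2 with hc
  have hcle := mdCoeff_le_one Q h1 p.1 p.2
  have hcpos : 0 < c := by
    rcases lt_or_eq_of_le hcle with h | h
    · simp only [hc]; linarith
    · exact absurd h hp.2
  set a : S → ℝ := fun y => Q p.1 y - min (Q p.1 y) (Q p.2 y) with ha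
  set b : S → ℝ := fun y => Q p.2 y - min (Q p.1 y) (Q p.2 y) with hb
  set g : S → ℝ := fun y => (Q ^ k) y z with hg
  have hsa : ∑ y, a y = c := by
    simp [ha, hc, Finset.sum_sub_distrib, h1, mdCoeff]
  have hsb : ∑ y, b y = c := by
    simp [hb, hc, Finset.sum_sub_distrib, h1, mdCoeff]
  have hcm : ∀ q : S × S, couplingMatrix Q p q = a q.1 * b q.2 / c := by
    intro q
    simp only [couplingMatrix, if_neg hp0, ha, hb, hc]
  calc ∑ q : S × S, couplingMatrix Q p q * (g q.1 - g q.2)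
      = ∑ y1, ∑ y2, ((a y1 * g y1) * (b y2 * c⁻¹) - a y1 * (b y2 * g y2 * c⁻¹)) := by
        rw [Fintype.sum_prod_type]
        refine Finset.sum_congr rfl fun y1 _ => Finset.sum_congr rfl fun y2 _ => ?_
        rw [hcm (y1, y2)]
        field_simp
    _ = (∑ y1, a y1 * g y1) * ((∑ y2, b y2) * c⁻¹)
          - (∑ y1, a y1) * ((∑ y2, b y2 * g y2) * c⁻¹) := by
        simp_rw [Finset.sum_sub_distrib, ← Finset.mul_sum, ← Finset.sum_mul]
    _ = (∑ y, a y * g y) - ∑ y, b y * g y := by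
        rw [hsa, hsb, mul_inv_cancel₀ hcpos.ne', mul_one, mul_comm c,
          mul_assoc, inv_mul_cancel₀ hcpos.ne', mul_one]
    _ = ∑ y, (Q p.1 y - Q p.2 y) * g y := by
        rw [← Finset.sum_sub_distrib]
        refine Finset.sum_congr rfl fun y _ => ?_
        simp only [ha, hb]
        ring
    _ = (Q ^ (k + 1)) p.1 z - (Q ^ (k + 1)) p.2 z := by
        rw [pow_succ', Matrix.mul_apply, Matrix.mul_apply, ← Finset.sum_sub_distrib]
        refine Finset.sum_congr rfl fun y _ => ?_
        simp only [hg]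
        ring

lemma f_succ_le (Q : Matrix S S ℝ) (h0 : ∀ x y, 0 ≤ Q x y) (h1 : ∀ x, ∑ y, Q x y = 1)
    (k : ℕ) (p : S × S) :
    ∑ z, |(Q ^ (k + 1)) p.1 z - (Q ^ (k + 1)) p.2 z| ≤
      ∑ q : S × S, couplingMatrix Q p q * ∑ z, |(Q ^ k) q.1 z - (Q ^ k) q.2 z| := by
  by_cases hp : p.1 = p.2 ∨ mdCoeff Q p.1 p.2 = 1
  · have hrows : ∀ z, (Q ^ (k + 1)) p.1 z = (Q ^ (k + 1)) p.2 z := by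
      rcases hp with h | h
      · intro z; rw [h]
      · exact rows_eq_pow_succ Q (rows_eq_of_mdCoeff_one Q h1 h) k
    have hlhs : ∑ z, |(Q ^ (k + 1)) p.1 z - (Q ^ (k + 1)) p.2 z| = 0 := by
      simp [hrows]
    rw [hlhs]
    refine Finset.sum_nonneg fun q _ => mul_nonneg (cm_nonneg Q h0 h1 p q) ?_
    exact Finset.sum_nonneg fun z _ => abs_nonneg _
  · calc ∑ z, |(Q ^ (k + 1)) p.1 z - (Q ^ (k + 1)) p.2 z|
        = ∑ z, |∑ q : S × S, couplingMatrix Q p q * ((Q ^ k) q.1 z - (Q ^ k) q.2 z)| := by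
          refine Finset.sum_congr rfl fun z _ => ?_
          rw [key_identity Q h1 k p hp z]
      _ ≤ ∑ z, ∑ q : S × S, couplingMatrix Q p q * |(Q ^ k) q.1 z - (Q ^ k) q.2 z| := by
          refine Finset.sum_le_sum fun z _ => ?_
          refine (Finset.abs_sum_le_sum_abs _ _).trans (Finset.sum_le_sum fun q _ => ?_)
          rw [abs_mul, abs_of_nonneg (cm_nonneg Q h0 h1 p q)]
      _ = ∑ q : S × S, couplingMatrix Q p q * ∑ z, |(Q ^ k) q.1 z - (Q ^ k) q.2 z| := by
          rw [Finset.sum_comm]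
          simp [Finset.mul_sum]

lemma f_le (Q : Matrix S S ℝ) (h0 : ∀ x y, 0 ≤ Q x y) (h1 : ∀ x, ∑ y, Q x y = 1) :
    ∀ (k : ℕ) (p : S × S), ∑ z, |(Q ^ k) p.1 z - (Q ^ k) p.2 z| ≤
      2 * ((couplingMatrix Q ^ k) *ᵥ (fun _ => (1 : ℝ))) p := by
  intro k
  induction k with
  | zero =>
    intro p
    rw [pow_zero, pow_zero, Matrix.one_mulVec]
    calc ∑ z, |(1 : Matrix S S ℝ) p.1 z - (1 : Matrix S S ℝ) p.2 z|
        ≤ ∑ z, (|(1 : Matrix S S ℝ) p.1 z| + |(1 : Matrix S S ℝ) p.2 z|) :=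
          Finset.sum_le_sum fun z _ => abs_sub _ _
      _ = 2 := by
          rw [Finset.sum_add_distrib]
          have : ∀ x : S, ∑ z, |(1 : Matrix S S ℝ) x z| = 1 := by
            intro x
            simp [Matrix.one_apply, apply_ite abs]
          rw [this, this]
          norm_num
      _ = 2 * (fun _ => (1:ℝ)) p := by norm_num
  | succ k ih =>
    intro p
    refine (f_succ_le Q h0 h1 k p).trans ?_
    calc ∑ q : S × S, couplingMatrix Q p q * ∑ z, |(Q ^ k) q.1 z - (Q ^ k) q.2 z|
        ≤ ∑ q : S × S, couplingMatrix Q p q *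
            (2 * ((couplingMatrix Q ^ k) *ᵥ (fun _ => (1:ℝ))) q) := by
          refine Finset.sum_le_sum fun q _ => ?_
          exact mul_le_mul_of_nonneg_left (ih q) (cm_nonneg Q h0 h1 p q)
      _ = 2 * ((couplingMatrix Q ^ (k + 1)) *ᵥ (fun _ => (1:ℝ))) p := by
          rw [pow_succ', ← Matrix.mulVec_mulVec]
          simp only [Matrix.mulVec, dotProduct]
          rw [Finset.mul_sum]
          refine Finset.sum_congr rfl fun q _ => ?_
          ring

lemma tv_contract (R : Matrix S S ℝ) (h0 : ∀ x y, 0 ≤ R x y) (h1 : ∀ x, ∑ y, R x y = 1)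
    (ν : S → ℝ) : ∑ y, |∑ w, ν w * R w y| ≤ ∑ w, |ν w| := by
  calc ∑ y, |∑ w, ν w * R w y| ≤ ∑ y, ∑ w, |ν w| * R w y := by
        refine Finset.sum_le_sum fun y _ => ?_
        refine (Finset.abs_sum_le_sum_abs _ _).trans (Finset.sum_le_sum fun w _ => ?_)
        rw [abs_mul, abs_of_nonneg (h0 w y)]
    _ = ∑ w, |ν w| * ∑ y, R w y := by
        rw [Finset.sum_comm]
        simp [Finset.mul_sum]
    _ = ∑ w, |ν w| := by simp [h1]

lemma spectrum_iff (M : Matrix (S × S) (S × S) ℂ) (z : ℂ) :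
    z ∈ spectrum ℂ M ↔ ∃ v : S × S → ℂ, v ≠ 0 ∧ M.mulVec v = z • v := by
  rw [← AlgEquiv.spectrum_eq (Matrix.toLinAlgEquiv' (R := ℂ) (n := S × S)) M,
    ← Module.End.hasEigenvalue_iff_mem_spectrum]
  constructor
  · intro h
    obtain ⟨v, hv⟩ := h.exists_hasEigenvector
    refine ⟨v, hv.right, ?_⟩
    have := Module.End.mem_eigenspace_iff.mp hv.left
    rwa [Matrix.toLinAlgEquiv'_apply] at this
  · rintro ⟨v, hv0, hv⟩
    refine Module.End.hasEigenvalue_of_hasEigenvector ⟨Module.End.mem_eigenspace_iff.mpr ?_, hv0⟩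
    rwa [Matrix.toLinAlgEquiv'_apply]

section Norms

attribute [local instance] Matrix.linftyOpNormedRing Matrix.linftyOpNormedAlgebra

lemma rowsum_le_norm (M : Matrix (S × S) (S × S) ℝ) (h0 : ∀ p q, 0 ≤ M p q) (p : S × S) :
    (∑ q, M p q) ≤ ‖M.map (fun a => (a : ℂ))‖ := by
  rw [Matrix.linfty_opNorm_def]
  have h1 : (∑ q, M p q) = ((∑ q, ‖(M.map (fun a => (a : ℂ))) p q‖₊ : NNReal) : ℝ) := by
    push_cast
    refine Finset.sum_congr rfl fun q _ => ?_
    simp [Matrix.map_apply, Complex.norm_real, abs_of_nonneg (h0 p q)]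
  rw [h1]
  exact_mod_cast NNReal.coe_le_coe.mpr
    (Finset.le_sup (f := fun i => ∑ j, ‖(M.map (fun a => (a : ℂ))) i j‖₊) (Finset.mem_univ p))

lemma norm_pow_eventually_le [Nonempty S] (V : Matrix (S × S) (S × S) ℝ)
    (r : ℝ)
    (hspec : ∀ z : ℂ, z ∈ spectrum ℂ (V.map (fun a => (a : ℂ))) → ‖z‖ ≤ r)
    (ε : ℝ) (hε : 0 < ε) (hr0 : 0 ≤ r) :
    ∃ K : ℕ, ∀ k, K ≤ k →
      ‖(V.map (fun a => (a : ℂ))) ^ k‖ ≤ (r + ε) ^ k := by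
  haveI : CompleteSpace (Matrix (S × S) (S × S) ℂ) := FiniteDimensional.complete ℂ _
  set A := V.map (fun a => (a : ℂ)) with hA
  have hsr : spectralRadius ℂ A ≤ ENNReal.ofReal r := by
    rw [spectralRadius]
    refine iSup₂_le fun z hz => ?_
    rw [← enorm_eq_nnnorm, ← ofReal_norm]
    exact ENNReal.ofReal_le_ofReal (hspec z hz)
  have hlt : spectralRadius ℂ A < ENNReal.ofReal (r + ε) :=
    lt_of_le_of_lt hsr (by
      rw [ENNReal.ofReal_lt_ofReal_iff (by linarith)]
      linarith)
  have h := spectrum.pow_nnnorm_pow_one_div_tendsto_nhds_spectralRadius A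
  have hev := h.eventually_lt_const hlt
  rw [Filter.eventually_atTop] at hev
  obtain ⟨K, hK⟩ := hev
  refine ⟨max K 1, fun k hk => ?_⟩
  have hk1 : 1 ≤ k := le_trans (le_max_right _ _) hk
  have hkK : K ≤ k := le_trans (le_max_left _ _) hk
  have h2 := (hK k hkK).le
  have hkne : (k : ℝ) ≠ 0 := by positivity
  have h3 : (‖A ^ k‖₊ : ENNReal) ≤ ENNReal.ofReal (r + ε) ^ k := by
    calc (‖A ^ k‖₊ : ENNReal)
        = ((‖A ^ k‖₊ : ENNReal) ^ (1 / (k : ℝ))) ^ (k : ℝ) := by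
          rw [← ENNReal.rpow_mul, one_div, inv_mul_cancel₀ hkne, ENNReal.rpow_one]
      _ ≤ (ENNReal.ofReal (r + ε)) ^ (k : ℝ) :=
          ENNReal.rpow_le_rpow h2 (Nat.cast_nonneg k)
      _ = ENNReal.ofReal (r + ε) ^ k := ENNReal.rpow_natCast _ k
  rw [← ENNReal.ofReal_pow (by linarith), ← enorm_eq_nnnorm, ← ofReal_norm] at h3
  exact (ENNReal.ofReal_le_ofReal_iff (by positivity)).mp h3


lemma map_pow_coe (V : Matrix (S × S) (S × S) ℝ) (k : ℕ) :
    (V.map (fun a => (a : ℂ))) ^ k = (V ^ k).map (fun a => (a : ℂ)) := by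
  have h : ∀ W : Matrix (S × S) (S × S) ℝ,
      W.map (fun a => (a : ℂ)) = (Complex.ofRealHom.mapMatrix :
        Matrix (S × S) (S × S) ℝ →+* Matrix (S × S) (S × S) ℂ) W := fun _ => rfl
  rw [h, h, ← map_pow]

lemma matrix_nontrivial [Nonempty S] : Nontrivial (Matrix (S × S) (S × S) ℂ) := by
  obtain ⟨p⟩ : Nonempty (S × S) := inferInstance
  refine ⟨0, 1, fun h => ?_⟩
  have := congrFun (congrFun h p) p
  simp [Matrix.one_apply] at this

lemma spec_facts [Nonempty S] (A : Matrix (S × S) (S × S) ℂ) :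
    (spectrum ℂ A).Nonempty ∧ BddAbove (norm '' spectrum ℂ A) := by
  haveI : CompleteSpace (Matrix (S × S) (S × S) ℂ) := FiniteDimensional.complete ℂ _
  haveI := matrix_nontrivial (S := S)
  exact ⟨spectrum.nonempty A,
    ((spectrum.isCompact A).image continuous_norm).bddAbove⟩

lemma mulVec_one_eventually_le [Nonempty S] (V : Matrix (S × S) (S × S) ℝ)
    (hV0 : ∀ p q, 0 ≤ V p q) (r : ℝ)
    (hspec : ∀ z : ℂ, z ∈ spectrum ℂ (V.map (fun a => (a : ℂ))) → ‖z‖ ≤ r)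
    (ε : ℝ) (hε : 0 < ε) (hr0 : 0 ≤ r) :
    ∃ K : ℕ, ∀ k, K ≤ k → ∀ p : S × S,
      2 * ((V ^ k) *ᵥ (fun _ => (1 : ℝ))) p ≤ (r + ε) ^ k := by
  obtain ⟨K1, hK1⟩ := norm_pow_eventually_le V r hspec (ε / 2) (by linarith) hr0
  set c := r + ε / 2 with hcdef
  set b := r + ε with hbdef
  have hc0 : 0 < c := by simp only [hcdef]; linarith
  have hb0 : 0 < b := by simp only [hbdef]; linarith
  have hcb : 1 < b / c := (one_lt_div hc0).mpr (by simp only [hcdef, hbdef]; linarith)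
  have hrat := (tendsto_pow_atTop_atTop_of_one_lt hcb).eventually_ge_atTop 2
  rw [Filter.eventually_atTop] at hrat
  obtain ⟨K2, hK2⟩ := hrat
  refine ⟨max K1 K2, fun k hk p => ?_⟩
  have hk1 : K1 ≤ k := le_trans (le_max_left _ _) hk
  have hk2 : K2 ≤ k := le_trans (le_max_right _ _) hk
  have hpow0 := pow_entry_nonneg V hV0 k
  have step1 : ((V ^ k) *ᵥ (fun _ => (1 : ℝ))) p = ∑ q, (V ^ k) p q := by
    simp [Matrix.mulVec, dotProduct]
  have step2 : (∑ q, (V ^ k) p q) ≤ ‖((V ^ k).map (fun a => (a : ℂ)))‖ :=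
    rowsum_le_norm (V ^ k) (hpow0) p
  have step3 : ‖((V ^ k).map (fun a => (a : ℂ)))‖ ≤ c ^ k := by
    rw [← map_pow_coe]
    exact hK1 k hk1
  have step4 : 2 * c ^ k ≤ b ^ k := by
    have h2 := hK2 k hk2
    rw [div_pow] at h2
    calc 2 * c ^ k ≤ (b ^ k / c ^ k) * c ^ k := by
          have := pow_pos hc0 k
          exact mul_le_mul_of_nonneg_right h2 (le_of_lt this)
      _ = b ^ k := div_mul_cancel₀ _ (pow_pos hc0 k).ne'
  calc 2 * ((V ^ k) *ᵥ (fun _ => (1 : ℝ))) p ≤ 2 * c ^ k := by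
        rw [step1]
        have := le_trans step2 step3
        linarith
    _ ≤ b ^ k := step4

end Norms

end RateAux

/-- **Convergence rate via the spectral radius of the coupling matrix.**
If `r(V^{(m)}) := max{|z| : z eigenvalue of V^{(m)}} < 1`, then for every `x`
and `ε > 0`, for all sufficiently large `n`,
`∑_y |(P^n)(x,y) - μ(y)| ≤ (r(V^{(m)}) + ε)^⌊n/m⌋`. -/
theorem rate_of_spectral_radius_lt_one
    {S : Type*} [Fintype S] [DecidableEq S] [Nontrivial S]
    (P : Matrix S S ℝ)
    (hnonneg : ∀ x y, 0 ≤ P x y) (hrow : ∀ x, ∑ y, P x y = 1)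
    (μ : S → ℝ) (hμ0 : ∀ y, 0 ≤ μ y) (hμ1 : ∑ y, μ y = 1)
    (hinv : ∀ y, ∑ x, μ x * P x y = μ y)
    (m : ℕ) (hm : 1 ≤ m)
    (r : ℝ)
    (hr : r = sSup {s : ℝ | ∃ z : ℂ,
      (∃ v : S × S → ℂ, v ≠ 0 ∧
        ((couplingMatrix (P ^ m)).map (fun a => (a : ℂ))).mulVec v = z • v) ∧
      ‖z‖ = s})
    (hrlt : r < 1) :
    ∀ x : S, ∀ ε : ℝ, 0 < ε → ∃ N : ℕ, ∀ n, N ≤ n →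
      ∑ y, |(P ^ n) x y - μ y| ≤ (r + ε) ^ (n / m) := by
  intro x ε hε
  haveI : Nonempty S := inferInstance
  set Q : Matrix S S ℝ := P ^ m with hQdef
  have hQ0 : ∀ x y, 0 ≤ Q x y := RateAux.pow_entry_nonneg P hnonneg m
  have hQ1 : ∀ x, ∑ y, Q x y = 1 := RateAux.row_sum_pow P hrow m
  set V : Matrix (S × S) (S × S) ℝ := couplingMatrix Q with hVdef
  set Vc : Matrix (S × S) (S × S) ℂ := V.map (fun a => (a : ℂ)) with hVcdef
  -- identify the set in `hr` with the image of the spectrum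
  have hset : {s : ℝ | ∃ z : ℂ,
      (∃ v : S × S → ℂ, v ≠ 0 ∧ Vc.mulVec v = z • v) ∧ ‖z‖ = s}
      = norm '' spectrum ℂ Vc := by
    ext s
    constructor
    · rintro ⟨z, hz, rfl⟩
      exact ⟨z, (RateAux.spectrum_iff Vc z).mpr hz, rfl⟩
    · rintro ⟨z, hz, rfl⟩
      exact ⟨z, (RateAux.spectrum_iff Vc z).mp hz, rfl⟩
  have hr2 : r = sSup (norm '' spectrum ℂ Vc) := by rw [hr, ← hset]
  obtain ⟨hne, hbdd⟩ := RateAux.spec_facts (S := S) Vc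
  have hzr : ∀ z ∈ spectrum ℂ Vc, ‖z‖ ≤ r := by
    intro z hz
    rw [hr2]
    exact le_csSup hbdd ⟨z, hz, rfl⟩
  have hr0 : 0 ≤ r := by
    obtain ⟨z0, hz0⟩ := hne
    exact le_trans (norm_nonneg z0) (hzr z0 hz0)
  have hV0 : ∀ p q, 0 ≤ V p q := fun p q => RateAux.cm_nonneg Q hQ0 hQ1 p q
  obtain ⟨K, hK⟩ := RateAux.mulVec_one_eventually_le V hV0 r hzr ε hε hr0
  -- invariance for powers
  have hinvpow : ∀ (k : ℕ) (y : S), ∑ x', μ x' * (P ^ k) x' y = μ y := by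
    intro k
    induction k with
    | zero =>
      intro y
      simp [Matrix.one_apply, Finset.sum_ite_eq, mul_ite]
    | succ k ih =>
      intro y
      simp only [pow_succ, Matrix.mul_apply]
      calc ∑ x', μ x' * ∑ w, (P ^ k) x' w * P w y
          = ∑ x', ∑ w, μ x' * ((P ^ k) x' w * P w y) := by
            simp [Finset.mul_sum]
        _ = ∑ w, (∑ x', μ x' * (P ^ k) x' w) * P w y := by
            rw [Finset.sum_comm]
            refine Finset.sum_congr rfl fun w _ => ?_
            rw [Finset.sum_mul]
            exact Finset.sum_congr rfl fun x' _ => by ring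
        _ = ∑ w, μ w * P w y := by
            refine Finset.sum_congr rfl fun w _ => ?_
            rw [ih w]
        _ = μ y := hinv y
  have hm0 : 0 < m := hm
  refine ⟨m * K, fun n hn => ?_⟩
  set k := n / m with hkdef
  have hkK : K ≤ k := by
    rw [hkdef, Nat.le_div_iff_mul_le hm0, mul_comm]
    exact le_trans hn (le_refl n)
  -- Step 1: contraction by the remaining P ^ (n % m)
  have hsplit : P ^ n = Q ^ k * P ^ (n % m) := by
    rw [hQdef, ← pow_mul, ← pow_add, Nat.div_add_mod]
  have hPn : ∀ y, (P ^ n) x y - μ y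
      = ∑ w, ((Q ^ k) x w - μ w) * (P ^ (n % m)) w y := by
    intro y
    rw [hsplit, Matrix.mul_apply]
    nth_rewrite 1 [(hinvpow (n % m) y).symm]
    rw [← Finset.sum_sub_distrib]
    exact Finset.sum_congr rfl fun w _ => by ring
  have step1 : ∑ y, |(P ^ n) x y - μ y| ≤ ∑ w, |(Q ^ k) x w - μ w| := by
    calc ∑ y, |(P ^ n) x y - μ y|
        = ∑ y, |∑ w, ((Q ^ k) x w - μ w) * (P ^ (n % m)) w y| := by
          refine Finset.sum_congr rfl fun y _ => ?_
          rw [hPn y]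
      _ ≤ ∑ w, |(Q ^ k) x w - μ w| :=
          RateAux.tv_contract (P ^ (n % m)) (RateAux.pow_entry_nonneg P hnonneg (n % m))
            (RateAux.row_sum_pow P hrow (n % m)) _
  -- Step 2: compare with the invariant measure via pairwise differences
  have hmu : ∀ w, (Q ^ k) x w - μ w
      = ∑ x2, μ x2 * ((Q ^ k) x w - (Q ^ k) x2 w) := by
    intro w
    have h1 : ∑ x2, μ x2 * (Q ^ k) x2 w = μ w := by
      have := hinvpow (m * k) w
      rwa [pow_mul] at this
    have h2 : ∑ x2, μ x2 * ((Q ^ k) x w - (Q ^ k) x2 w)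
        = (∑ x2, μ x2) * (Q ^ k) x w - ∑ x2, μ x2 * (Q ^ k) x2 w := by
      rw [Finset.sum_mul, ← Finset.sum_sub_distrib]
      exact Finset.sum_congr rfl fun x2 _ => by ring
    rw [h2, hμ1, h1, one_mul]
  have step2 : ∑ w, |(Q ^ k) x w - μ w|
      ≤ ∑ x2, μ x2 * ∑ w, |(Q ^ k) x w - (Q ^ k) x2 w| := by
    calc ∑ w, |(Q ^ k) x w - μ w|
        = ∑ w, |∑ x2, μ x2 * ((Q ^ k) x w - (Q ^ k) x2 w)| := by
          refine Finset.sum_congr rfl fun w _ => ?_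
          rw [hmu w]
      _ ≤ ∑ w, ∑ x2, μ x2 * |(Q ^ k) x w - (Q ^ k) x2 w| := by
          refine Finset.sum_le_sum fun w _ => ?_
          refine (Finset.abs_sum_le_sum_abs _ _).trans (Finset.sum_le_sum fun x2 _ => ?_)
          rw [abs_mul, abs_of_nonneg (hμ0 x2)]
      _ = ∑ x2, μ x2 * ∑ w, |(Q ^ k) x w - (Q ^ k) x2 w| := by
          rw [Finset.sum_comm]
          simp [Finset.mul_sum]
  -- Step 3: coupling bound
  have step3 : ∀ x2 : S, ∑ w, |(Q ^ k) x w - (Q ^ k) x2 w| ≤ (r + ε) ^ k := by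
    intro x2
    have hf := RateAux.f_le Q hQ0 hQ1 k (x, x2)
    exact le_trans hf (hK k hkK (x, x2))
  calc ∑ y, |(P ^ n) x y - μ y| ≤ ∑ w, |(Q ^ k) x w - μ w| := step1
    _ ≤ ∑ x2, μ x2 * ∑ w, |(Q ^ k) x w - (Q ^ k) x2 w| := step2
    _ ≤ ∑ x2, μ x2 * (r + ε) ^ k := by
        refine Finset.sum_le_sum fun x2 _ => ?_
        exact mul_le_mul_of_nonneg_left (step3 x2) (hμ0 x2)
    _ = (r + ε) ^ k := by rw [← Finset.sum_mul, hμ1, one_mul]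
end

section
/- Let S be a measurable space and (κ_t)_{t≥0} a sequence of Markov kernels on S (a non-homogeneous Markov chain). Then for all integers m ≥ 1 and k ≥ 1, sup_{x,x'∈S} sup_{A measurable} (P_{0,km}(x, A) − P_{0,km}(x', A)) ≤ ∏_{t=0}^{k−1} (1 − α_{tm}^{(m)}); equivalently, the total variation distance between the time-km distributions from any two initial states is at most 2 ∏_{t=0}^{k−1} (1 − α_{tm}^{(m)}). -/
open MeasureTheory ProbabilityTheory

/-- `transKernel κ s k` is the transition kernel of the non-homogeneous chain
with one-step kernels `(κ t)` from time `s` to time `s + k`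
(`transKernel κ s 0` is the identity/Dirac kernel). -/
noncomputable def transKernel {S : Type*} [MeasurableSpace S]
    (κ : ℕ → Kernel S S) : ℕ → ℕ → Kernel S S
  | _, 0 => Kernel.id
  | s, k + 1 => (transKernel κ (s + 1) k) ∘ₖ (κ s)

lemma transKernel_isMarkov {S : Type*} [MeasurableSpace S]
    (κ : ℕ → Kernel S S) (hκ : ∀ t, IsMarkovKernel (κ t)) :
    ∀ k s, IsMarkovKernel (transKernel κ s k) := by
  intro k
  induction k with
  | zero => intro s; rw [transKernel]; infer_instance
  | succ n ih =>
    intro s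
    rw [transKernel]
    haveI := ih (s + 1)
    haveI := hκ s
    infer_instance

lemma transKernel_add {S : Type*} [MeasurableSpace S]
    (κ : ℕ → Kernel S S) (hκ : ∀ t, IsMarkovKernel (κ t)) :
    ∀ a b s, transKernel κ s (a + b)
      = (transKernel κ (s + a) b) ∘ₖ (transKernel κ s a) := by
  intro a
  induction a with
  | zero => intro b s; simp [transKernel, Kernel.comp_id]
  | succ n ih =>
    intro b s
    have h1 : n + 1 + b = (n + b) + 1 := by omega
    rw [h1, transKernel, ih b (s + 1), transKernel]
    haveI := transKernel_isMarkov κ hκ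
    haveI := hκ s
    rw [Kernel.comp_assoc]
    congr 2
    omega

/-- Main analytic lemma: difference of integrals bounded via the
Markov–Dobrushin overlap, with sup bound on `g`. -/
lemma md_contract_sup {S : Type*} [MeasurableSpace S]
    (μ ν : Measure S) [IsProbabilityMeasure μ] [IsProbabilityMeasure ν]
    (g : S → ENNReal) (hg : Measurable g) (D : ENNReal) (hgD : ∀ y, g y ≤ D) :
    (∫⁻ y, g y ∂μ) - (∫⁻ y, g y ∂ν)
      ≤ (1 - ∫⁻ y, min (ν.rnDeriv μ y) 1 ∂μ) * D := by
  set h : S → ENNReal := fun y => min (ν.rnDeriv μ y) 1 with hh_def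
  have hh : Measurable h := (Measure.measurable_rnDeriv ν μ).min measurable_const
  have hh1 : ∀ y, h y ≤ 1 := fun y => min_le_right _ _
  have step1 : ∫⁻ y, g y * h y ∂μ ≤ ∫⁻ y, g y ∂ν := by
    calc ∫⁻ y, g y * h y ∂μ ≤ ∫⁻ y, ν.rnDeriv μ y * g y ∂μ := by
          refine lintegral_mono fun y => ?_
          rw [mul_comm]
          exact mul_le_mul_left (min_le_left _ _) _
      _ = ∫⁻ y, g y ∂(μ.withDensity (ν.rnDeriv μ)) := by
          rw [lintegral_withDensity_eq_lintegral_mul _ (Measure.measurable_rnDeriv ν μ) hg]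
          rfl
      _ ≤ ∫⁻ y, g y ∂ν := lintegral_mono' (Measure.withDensity_rnDeriv_le ν μ) le_rfl
  have pt : ∀ y, g y ≤ g y * h y + D * (1 - h y) := by
    intro y
    have h1 : h y + (1 - h y) = 1 := by
      rw [add_comm]; exact tsub_add_cancel_of_le (hh1 y)
    calc g y = g y * (h y + (1 - h y)) := by rw [h1, mul_one]
      _ = g y * h y + g y * (1 - h y) := by rw [mul_add]
      _ ≤ g y * h y + D * (1 - h y) :=
          add_le_add_right (mul_le_mul_left (hgD y) _) _
  have step2 : ∫⁻ y, g y ∂μ ≤ ∫⁻ y, g y * h y ∂μ + D * ∫⁻ y, (1 - h y) ∂μ := by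
    calc ∫⁻ y, g y ∂μ ≤ ∫⁻ y, (g y * h y + D * (1 - h y)) ∂μ := lintegral_mono pt
      _ = ∫⁻ y, g y * h y ∂μ + ∫⁻ y, D * (1 - h y) ∂μ :=
          lintegral_add_left (hg.mul hh) _
      _ = ∫⁻ y, g y * h y ∂μ + D * ∫⁻ y, (1 - h y) ∂μ := by
          rw [lintegral_const_mul D (f := fun y => 1 - h y) ((measurable_const.sub hh))]
  have hint1 : ∫⁻ y, (1 - h y) ∂μ = 1 - ∫⁻ y, h y ∂μ := by
    have hfin : ∫⁻ y, h y ∂μ ≠ ⊤ := by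
      refine ne_of_lt (lt_of_le_of_lt ?_ (by simp : (1 : ENNReal) < ⊤))
      calc ∫⁻ y, h y ∂μ ≤ ∫⁻ _, (1 : ENNReal) ∂μ := lintegral_mono hh1
        _ = 1 := by simp
    have := lintegral_sub hh hfin (Filter.Eventually.of_forall hh1)
    simpa using this
  calc (∫⁻ y, g y ∂μ) - (∫⁻ y, g y ∂ν)
      ≤ (∫⁻ y, g y ∂μ) - ∫⁻ y, g y * h y ∂μ := tsub_le_tsub_left step1 _
    _ ≤ D * ∫⁻ y, (1 - h y) ∂μ := by
        rw [tsub_le_iff_right, add_comm]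
        exact step2
    _ = (1 - ∫⁻ y, h y ∂μ) * D := by rw [hint1, mul_comm]

/-- Oscillation version of the contraction lemma. -/
lemma md_contract_osc {S : Type*} [MeasurableSpace S]
    (μ ν : Measure S) [IsProbabilityMeasure μ] [IsProbabilityMeasure ν]
    (g : S → ENNReal) (hg : Measurable g) (hg1 : ∀ y, g y ≤ 1)
    (D : ENNReal) (hosc : ∀ y y', g y - g y' ≤ D) :
    (∫⁻ y, g y ∂μ) - (∫⁻ y, g y ∂ν)
      ≤ (1 - ∫⁻ y, min (ν.rnDeriv μ y) 1 ∂μ) * D := by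
  haveI : Nonempty S := by
    by_contra hne
    rw [not_nonempty_iff] at hne
    have h1 : μ Set.univ = 1 := measure_univ
    rw [Set.univ_eq_empty_iff.mpr hne, measure_empty] at h1
    exact zero_ne_one h1
  set c : ENNReal := ⨅ y, g y with hc_def
  have hc_le : ∀ y, c ≤ g y := fun y => iInf_le _ y
  have hgD : ∀ y, g y - c ≤ D := by
    intro y
    rw [hc_def, ENNReal.sub_iInf]
    exact iSup_le fun y' => hosc y y'
  have hg' : Measurable fun y => g y - c := hg.sub measurable_const
  have hint : ∀ (ρ : Measure S), IsProbabilityMeasure ρ →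
      ∫⁻ y, (g y - c) ∂ρ = (∫⁻ y, g y ∂ρ) - c := by
    intro ρ hρ
    have hfin : ∫⁻ _, c ∂ρ ≠ ⊤ := by
      have : c ≤ 1 := le_trans (hc_le Classical.ofNonempty) (hg1 _)
      simp only [lintegral_const, measure_univ, mul_one]
      exact ne_of_lt (lt_of_le_of_lt this (by simp))
    have := lintegral_sub measurable_const hfin
      (Filter.Eventually.of_forall hc_le) (μ := ρ) (f := g)
    simpa using this
  have hsum : ∀ (ρ : Measure S), IsProbabilityMeasure ρ →
      ∫⁻ y, g y ∂ρ = (∫⁻ y, (g y - c) ∂ρ) + c := by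
    intro ρ hρ
    rw [hint ρ hρ]
    refine (tsub_add_cancel_of_le ?_).symm
    calc c = ∫⁻ _, c ∂ρ := by simp
      _ ≤ ∫⁻ y, g y ∂ρ := lintegral_mono hc_le
  rw [hsum μ inferInstance, hsum ν inferInstance]
  calc (∫⁻ y, (g y - c) ∂μ) + c - ((∫⁻ y, (g y - c) ∂ν) + c)
      ≤ (∫⁻ y, (g y - c) ∂μ) - (∫⁻ y, (g y - c) ∂ν) := by
        rw [tsub_le_iff_right]
        calc (∫⁻ y, (g y - c) ∂μ) + c
            ≤ ((∫⁻ y, (g y - c) ∂μ) - (∫⁻ y, (g y - c) ∂ν)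
                + (∫⁻ y, (g y - c) ∂ν)) + c := add_le_add_left le_tsub_add _
          _ = (∫⁻ y, (g y - c) ∂μ) - (∫⁻ y, (g y - c) ∂ν)
                + ((∫⁻ y, (g y - c) ∂ν) + c) := by ring
    _ ≤ (1 - ∫⁻ y, min (ν.rnDeriv μ y) 1 ∂μ) * D :=
        md_contract_sup μ ν _ hg' D hgD

/-- **Kolmogorov-type product bound for non-homogeneous chains ("`m`-step
Markov–Dobrushin" bound).**  With
`α_t^{(m)} := inf_{x,x'} ∫ min(dP_{t,t+m}(x',·)/dP_{t,t+m}(x,·), 1) dP_{t,t+m}(x,·)`,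
for all `m, k ≥ 1`,
`sup_{x,x'} sup_A (P_{0,km}(x,A) - P_{0,km}(x',A)) ≤ ∏_{t<k} (1 - α_{tm}^{(m)})`. -/
theorem nonhomogeneous_md_product_bound
    {S : Type*} [MeasurableSpace S]
    (κ : ℕ → Kernel S S) (hκ : ∀ t, IsMarkovKernel (κ t))
    (α : ℕ → ℕ → ENNReal)
    (hα : ∀ t m, α t m = ⨅ (x : S) (x' : S),
      ∫⁻ y, min ((transKernel κ t m x').rnDeriv (transKernel κ t m x) y) 1
        ∂(transKernel κ t m x)) :
    ∀ m k : ℕ, 1 ≤ m → 1 ≤ k →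
      ∀ (x x' : S) (A : Set S), MeasurableSet A →
        transKernel κ 0 (k * m) x A - transKernel κ 0 (k * m) x' A
          ≤ ∏ t ∈ Finset.range k, (1 - α (t * m) m) := by
  intro m k _ _
  haveI := transKernel_isMarkov κ hκ
  -- generalized claim with arbitrary start time
  have key : ∀ k s (x x' : S) (A : Set S), MeasurableSet A →
      transKernel κ s (k * m) x A - transKernel κ s (k * m) x' A
        ≤ ∏ t ∈ Finset.range k, (1 - α (s + t * m) m) := by
    intro k
    induction k with
    | zero =>
      intro s x x' A hA
      simp only [Finset.range_zero, Finset.prod_empty]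
      exact le_trans tsub_le_self prob_le_one
    | succ n ih =>
      intro s x x' A hA
      have hsplit : (n + 1) * m = m + n * m := by ring
      have hcomp : transKernel κ s ((n + 1) * m)
          = (transKernel κ (s + m) (n * m)) ∘ₖ (transKernel κ s m) := by
        rw [hsplit, transKernel_add κ hκ m (n * m) s]
      set g : S → ENNReal := fun y => transKernel κ (s + m) (n * m) y A with hg_def
      have hgmeas : Measurable g := Kernel.measurable_coe _ hA
      have hg1 : ∀ y, g y ≤ 1 := fun y => prob_le_one
      set D : ENNReal := ∏ t ∈ Finset.range n, (1 - α (s + m + t * m) m) with hD_def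
      have hosc : ∀ y y', g y - g y' ≤ D := fun y y' => ih (s + m) y y' A hA
      have happ : ∀ z : S, transKernel κ s ((n + 1) * m) z A = ∫⁻ y, g y ∂(transKernel κ s m z) := by
        intro z
        rw [hcomp, Kernel.comp_apply' _ _ _ hA]
      rw [happ x, happ x']
      have hαle : α s m ≤ ∫⁻ y, min ((transKernel κ s m x').rnDeriv (transKernel κ s m x) y) 1
          ∂(transKernel κ s m x) := by
        rw [hα s m]
        exact le_trans (iInf_le _ x) (iInf_le _ x')
      calc (∫⁻ y, g y ∂(transKernel κ s m x)) - (∫⁻ y, g y ∂(transKernel κ s m x'))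
          ≤ (1 - ∫⁻ y, min ((transKernel κ s m x').rnDeriv (transKernel κ s m x) y) 1
              ∂(transKernel κ s m x)) * D :=
            md_contract_osc _ _ g hgmeas hg1 D hosc
        _ ≤ (1 - α s m) * D := mul_le_mul_left (tsub_le_tsub_left hαle _) _
        _ = ∏ t ∈ Finset.range (n + 1), (1 - α (s + t * m) m) := by
            rw [Finset.prod_range_succ']
            simp only [Nat.zero_mul, Nat.add_zero]
            rw [mul_comm, hD_def]
            congr 1
            refine Finset.prod_congr rfl fun t _ => ?_
            congr 2
            ring
  have := key k 0 
  simpa using this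
end
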